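/- arXiv:2507.00766 — 9 statements merged into one kernel-verified Lean document; each statement's English description precedes it below -/
import Mathlib

section
/- Let π be a Dyck path of semilength n with λ = λ(π), let π' be the Dyck path of semilength n−1 obtained by deleting the last NE corner of π, let ν ⊢ n−1 and T ∈ SYT^{π'}_ν. Then the tableau T^{+n,1} obtained by appending a box with entry n at the end of the first row of T is always a valid element of SYT^π_{ν+ε₁}, and W(T^{+n,1};π) = q^{ν₁} · W(T;π') in ℤ[q]. -/
open Finset Polynomial
open scoped Classical

noncomputable section

/-- The q-integer `[k]_q = 1 + q + ⋯ + q^(k-1)` in `ℤ[q]`. -/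
def qInt (k : ℕ) : Polynomial ℤ := ∑ i ∈ Finset.range k, Polynomial.X ^ i

/-- Cells of the Young diagram of a partition `lam` (1-indexed parts `lam 1, lam 2, …`),
rows bounded by `rows`.  A cell is a pair `(i, j)` with `1 ≤ i ≤ rows` and `1 ≤ j ≤ lam i`. -/
def cells (lam : ℕ → ℕ) (rows : ℕ) : Finset (ℕ × ℕ) :=
  (Finset.Icc 1 rows ×ˢ Finset.Icc 1 (lam 1)).filter fun c => c.2 ≤ lam c.1

/-- A set of cells is non-attacking if no two distinct cells share a row or a column. -/
def NonAttacking (C : Finset (ℕ × ℕ)) : Prop :=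
  ∀ a ∈ C, ∀ b ∈ C, a ≠ b → a.1 ≠ b.1 ∧ a.2 ≠ b.2

/-- The Garsia–Remmel `inv` statistic of a rook placement `C` on `lam`:
the number of cells that contain no rook, are not above a rook in their column
(English notation: a cell `c` is above a rook `r` if `r.2 = c.2` and `c.1 < r.1`),
and are not to the left of a rook in their row. -/
def rookInv (lam : ℕ → ℕ) (rows : ℕ) (C : Finset (ℕ × ℕ)) : ℕ :=
  ((cells lam rows).filter fun c => c ∉ C ∧
    (∀ r ∈ C, r.2 = c.2 → r.1 ≤ c.1) ∧ (∀ r ∈ C, r.1 = c.1 → r.2 ≤ c.2)).card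

/-- The Garsia–Remmel q-rook number `R_k(lam; q) ∈ ℤ[q]`. -/
def qRook (lam : ℕ → ℕ) (rows k : ℕ) : Polynomial ℤ :=
  ∑ C ∈ (Finset.powersetCard k (cells lam rows)).filter NonAttacking,
    Polynomial.X ^ rookInv lam rows C

/-- The conjugate partition: `lam'_j = #{i ∈ [1..rows] : lam i ≥ j}`. -/
def conjPart (lam : ℕ → ℕ) (rows j : ℕ) : ℕ :=
  ((Finset.Icc 1 rows).filter fun i => j ≤ lam i).card

/-- `(i, j) ∈ Area(π)` where `π` is the Dyck path of semilength `n` with `λ(π) = lam`: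
`i < j ≤ n − lam'_i`. -/
def InArea (lam : ℕ → ℕ) (n i j : ℕ) : Prop :=
  i < j ∧ j + conjPart lam n i ≤ n

/-- The order `i <_π j`: `i < j` and `(i, j) ∉ Area(π)`. -/
def PiLt (lam : ℕ → ℕ) (n i j : ℕ) : Prop :=
  i < j ∧ ¬ InArea lam n i j

/-- `mu` is a partition of `n` (1-indexed, weakly decreasing, supported on `[1..n]`). -/
def IsPartitionOf (n : ℕ) (mu : ℕ → ℕ) : Prop :=
  (∀ i j, 1 ≤ i → i ≤ j → mu j ≤ mu i) ∧ (∀ i, n < i → mu i = 0) ∧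
    (∑ i ∈ Finset.Icc 1 n, mu i) = n

/-- `T` is a standard Young tableau of shape `mu ⊢ n` (with `T = 0` off the diagram):
a bijection from the cells of `mu` onto `{1, …, n}`, increasing along rows and columns. -/
def IsSYT (mu : ℕ → ℕ) (n : ℕ) (T : ℕ × ℕ → ℕ) : Prop :=
  (∀ c, c ∉ cells mu n → T c = 0) ∧
  Set.BijOn T (cells mu n : Set (ℕ × ℕ)) (Set.Icc 1 n) ∧
  (∀ c ∈ cells mu n, ∀ c' ∈ cells mu n, c.1 = c'.1 → c.2 < c'.2 → T c < T c') ∧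
  (∀ c ∈ cells mu n, ∀ c' ∈ cells mu n, c.2 = c'.2 → c.1 < c'.1 → T c < T c')

/-- `T ∈ SYT^π_mu`: a standard Young tableau of shape `mu ⊢ n` such that whenever a cell
has a cell directly above it, the entries compare in the order `<_π` (for the Dyck path of
semilength `npath` with partition `lam`). -/
def IsSYTpi (lam : ℕ → ℕ) (npath : ℕ) (mu : ℕ → ℕ) (n : ℕ) (T : ℕ × ℕ → ℕ) : Prop :=
  IsSYT mu n T ∧ ∀ c ∈ cells mu n, 2 ≤ c.1 → PiLt lam npath (T (c.1 - 1, c.2)) (T c)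

/-- `γ(T)`: the number of pairs of cells `(b, c)` of `mu` with the row of `c` strictly above
the row of `b` and `(T c, T b) ∈ Area(π)`. -/
def gam (lam : ℕ → ℕ) (npath : ℕ) (mu : ℕ → ℕ) (n : ℕ) (T : ℕ × ℕ → ℕ) : ℕ :=
  ((cells mu n ×ˢ cells mu n).filter fun p =>
    p.2.1 < p.1.1 ∧ InArea lam npath (T p.2) (T p.1)).card

/-- `arm_{<_π j}(b)`: the number of cells `c` of `mu` in the same row as `b`, strictly to the
right of `b`, with `T c <_π j`. -/
def armLt (lam : ℕ → ℕ) (npath : ℕ) (mu : ℕ → ℕ) (n : ℕ) (T : ℕ × ℕ → ℕ)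
    (b : ℕ × ℕ) (j : ℕ) : ℕ :=
  ((cells mu n).filter fun c => c.1 = b.1 ∧ b.2 < c.2 ∧ PiLt lam npath (T c) j).card

/-- `n(mu') = Σ_i C(mu_i, 2)`. -/
def nConj (mu : ℕ → ℕ) (n : ℕ) : ℕ := ∑ i ∈ Finset.Icc 1 n, Nat.choose (mu i) 2

/-- The product `∏_b [arm_{<_π T(b)}(up(b)) + 1]_q` over the cells `b` of `mu` not in the
first row, where `up(b)` is the cell directly above `b`. -/
def armProd (lam : ℕ → ℕ) (npath : ℕ) (mu : ℕ → ℕ) (n : ℕ) (T : ℕ × ℕ → ℕ) :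
    Polynomial ℤ :=
  ∏ b ∈ (cells mu n).filter (fun b => 2 ≤ b.1),
    qInt (armLt lam npath mu n T (b.1 - 1, b.2) (T b) + 1)

/-- The normalized weight `W(T; π) = q^(n(mu') + γ(T)) · ∏_b [arm_{<_π T(b)}(up(b)) + 1]_q`. -/
def Wwt (lam : ℕ → ℕ) (npath : ℕ) (mu : ℕ → ℕ) (n : ℕ) (T : ℕ × ℕ → ℕ) : Polynomial ℤ :=
  Polynomial.X ^ (nConj mu n + gam lam npath mu n T) * armProd lam npath mu n T

/-- The partition of the Dyck path `π'` obtained by deleting the last NE corner of `π`: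
the first row of `λ(π)` is removed. -/
def shiftPart (lam : ℕ → ℕ) : ℕ → ℕ := fun i => lam (i + 1)

/-- `ν + ε_i`: one box added to row `i` of `ν`. -/
def addRow (nu : ℕ → ℕ) (i : ℕ) : ℕ → ℕ := fun j => if j = i then nu j + 1 else nu j

/-- `T^{+n,i}`: the tableau `T` with a box filled `n` appended at the end of row `i`. -/
def addEntry (T : ℕ × ℕ → ℕ) (nu : ℕ → ℕ) (i n : ℕ) : ℕ × ℕ → ℕ :=
  fun c => if c = (i, nu i + 1) then n else T c

/-- `N(j)`: the number of cells `b` in row `j` of `ν` with no cell of `ν` directly below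
them and `T b <_π n`. -/
def Nstat (lam : ℕ → ℕ) (n : ℕ) (nu : ℕ → ℕ) (T : ℕ × ℕ → ℕ) (j : ℕ) : ℕ :=
  ((cells nu (n - 1)).filter fun b => b.1 = j ∧ (b.1 + 1, b.2) ∉ cells nu (n - 1) ∧
    PiLt lam n (T b) n).card

lemma mem_cells {lam : ℕ → ℕ} {rows : ℕ} (hA : ∀ i j, 1 ≤ i → i ≤ j → lam j ≤ lam i)
    {c : ℕ × ℕ} :
    c ∈ cells lam rows ↔ 1 ≤ c.1 ∧ c.1 ≤ rows ∧ 1 ≤ c.2 ∧ c.2 ≤ lam c.1 := by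
  simp only [cells, Finset.mem_filter, Finset.mem_product, Finset.mem_Icc]
  constructor
  · rintro ⟨⟨⟨h1, h2⟩, ⟨h3, _⟩⟩, h5⟩; exact ⟨h1, h2, h3, h5⟩
  · rintro ⟨h1, h2, h3, h5⟩
    exact ⟨⟨⟨h1, h2⟩, ⟨h3, le_trans h5 (hA 1 c.1 le_rfl h1)⟩⟩, h5⟩

lemma conj_shift (lam : ℕ → ℕ) (n : ℕ) (hn : 1 ≤ n) (i : ℕ) :
    conjPart lam n i = conjPart (shiftPart lam) (n - 1) i + (if i ≤ lam 1 then 1 else 0) := by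
  unfold conjPart
  have h1 : Finset.Icc 1 n = insert 1 (Finset.Icc 2 n) := by
    ext k; simp only [Finset.mem_Icc, Finset.mem_insert]; omega
  rw [h1, Finset.filter_insert]
  have h2 : ((Finset.Icc 2 n).filter fun k => i ≤ lam k).card
      = ((Finset.Icc 1 (n - 1)).filter fun k => i ≤ shiftPart lam k).card := by
    refine Finset.card_bij' (fun k _ => k - 1) (fun k _ => k + 1) ?_ ?_ ?_ ?_
    · intro a ha
      simp only [Finset.mem_filter, Finset.mem_Icc] at ha ⊢
      refine ⟨by omega, ?_⟩
      have : a - 1 + 1 = a := by omega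
      simpa [shiftPart, this] using ha.2
    · intro a ha
      simp only [Finset.mem_filter, Finset.mem_Icc] at ha ⊢
      exact ⟨by omega, ha.2⟩
    · intro a ha
      simp only [Finset.mem_filter, Finset.mem_Icc] at ha
      show a - 1 + 1 = a
      omega
    · intro a _
      show a + 1 - 1 = a
      omega
  split_ifs with h
  · rw [Finset.card_insert_of_notMem (by simp [Finset.mem_Icc])]
    omega
  · omega

lemma inArea_shift {lam : ℕ → ℕ} {n : ℕ} (hn : 1 ≤ n)
    (hAnti : ∀ i j, 1 ≤ i → i ≤ j → lam j ≤ lam i) {i j : ℕ} (hj : j ≤ n - 1) :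
    InArea lam n i j ↔ InArea (shiftPart lam) (n - 1) i j := by
  unfold InArea
  have hc := conj_shift lam n hn i
  by_cases h : i ≤ lam 1
  · simp only [h, if_pos] at hc; omega
  · simp only [h, if_neg, not_false_iff] at hc
    have hz : conjPart (shiftPart lam) (n - 1) i = 0 := by
      unfold conjPart
      rw [Finset.card_eq_zero, Finset.filter_eq_empty_iff]
      intro k hk
      simp only [Finset.mem_Icc] at hk
      have := hAnti 1 (k + 1) le_rfl (by omega)
      simp only [shiftPart]; omega
    omega

lemma piLt_shift {lam : ℕ → ℕ} {n : ℕ} (hn : 1 ≤ n)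
    (hAnti : ∀ i j, 1 ≤ i → i ≤ j → lam j ≤ lam i) {i j : ℕ} (hj : j ≤ n - 1) :
    PiLt lam n i j ↔ PiLt (shiftPart lam) (n - 1) i j := by
  unfold PiLt
  rw [inArea_shift hn hAnti hj]

/-- Lemma: for `T ∈ SYT^{π'}_ν`, the tableau `T^{+n,1}` is always a valid element of
`SYT^π_{ν+ε₁}`, and `W(T^{+n,1}; π) = q^(ν₁) · W(T; π')` in `ℤ[q]`. -/
theorem wt_comparison_first_row (n : ℕ) (hn : 1 ≤ n) (lam : ℕ → ℕ)
    (hAnti : ∀ i j, 1 ≤ i → i ≤ j → lam j ≤ lam i)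
    (hStair : ∀ i, 1 ≤ i → i ≤ n → lam i + i ≤ n)
    (nu : ℕ → ℕ) (hnu : IsPartitionOf (n - 1) nu) (T : ℕ × ℕ → ℕ)
    (hT : IsSYTpi (shiftPart lam) (n - 1) nu (n - 1) T) :
    IsSYTpi lam n (addRow nu 1) n (addEntry T nu 1 n) ∧
    Wwt lam n (addRow nu 1) n (addEntry T nu 1 n) =
      Polynomial.X ^ nu 1 * Wwt (shiftPart lam) (n - 1) nu (n - 1) T := by
  obtain ⟨hnuA, hz, -⟩ := hnu
  obtain ⟨⟨hT0, hTbij, hTrow, hTcol⟩, hTpi⟩ := hT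
  set T' := addEntry T nu 1 n with hT'
  set nc : ℕ × ℕ := (1, nu 1 + 1) with hnc
  have hT'nc : T' nc = n := by simp [hT', addEntry, hnc]
  have hT'eq : ∀ c : ℕ × ℕ, c ≠ nc → T' c = T c := by
    intro c hc; show (if c = nc then n else T c) = T c; exact if_neg hc
  have newA : ∀ i j, 1 ≤ i → i ≤ j → addRow nu 1 j ≤ addRow nu 1 i := by
    intro i j hi hij
    unfold addRow
    by_cases hj1 : j = 1
    · have hi1 : i = 1 := by omega
      subst hi1; subst hj1; simp
    · rw [if_neg hj1]
      by_cases hi1 : i = 1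
      · rw [if_pos hi1]; subst hi1
        have := hnuA 1 j le_rfl (by omega); omega
      · rw [if_neg hi1]; exact hnuA i j hi hij
  have hnu1pos : 1 ≤ nu 1 → 1 ≤ n - 1 := by
    intro h; by_contra hcon; have := hz 1 (by omega); omega
  have cellsEq : cells (addRow nu 1) n = insert nc (cells nu (n - 1)) := by
    ext ⟨i, j⟩
    rw [mem_cells newA, Finset.mem_insert, mem_cells hnuA]
    constructor
    · rintro ⟨hi1, hin, hj1, hj⟩
      by_cases hI : i = 1
      · subst hI
        simp only [addRow, if_true, eq_self_iff_true] at hj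
        by_cases hJ : j = nu 1 + 1
        · left; rw [hnc, hJ]
        · right
          have hj' : j ≤ nu 1 := by omega
          exact ⟨hi1, hnu1pos (by omega), hj1, hj'⟩
      · right
        simp only [addRow, if_neg hI] at hj
        have : i ≤ n - 1 := by
          by_contra hcon; have := hz i (by omega); omega
        exact ⟨hi1, this, hj1, hj⟩
    · rintro (h | ⟨hi1, hin, hj1, hj⟩)
      · rw [hnc] at h
        rw [Prod.ext_iff] at h
        obtain ⟨h1, h2⟩ := h
        simp only at h1 h2
        subst h1; subst h2
        exact ⟨le_rfl, hn, by omega, by simp [addRow]⟩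
      · refine ⟨hi1, by omega, hj1, ?_⟩
        unfold addRow
        split_ifs with h
        · subst h; omega
        · exact hj
  have ncNotOld : nc ∉ cells nu (n - 1) := by
    rw [mem_cells hnuA]; simp [hnc]
  have Tval : ∀ c ∈ cells nu (n - 1), 1 ≤ T c ∧ T c ≤ n - 1 := by
    intro c hc
    have := hTbij.mapsTo (by exact_mod_cast hc)
    simpa [Set.mem_Icc] using this
  have hT'old : ∀ c ∈ cells nu (n - 1), T' c = T c := fun c hc =>
    hT'eq c (fun h => ncNotOld (h ▸ hc))
  -- membership in new cells splits
  have memNew : ∀ c : ℕ × ℕ, c ∈ cells (addRow nu 1) n ↔ c = nc ∨ c ∈ cells nu (n - 1) := by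
    intro c; rw [cellsEq, Finset.mem_insert]
  have rowPos : ∀ c ∈ cells nu (n - 1), 1 ≤ c.1 ∧ 1 ≤ c.2 ∧ c.2 ≤ nu c.1 := by
    intro c hc; rw [mem_cells hnuA] at hc; exact ⟨hc.1, hc.2.2.1, hc.2.2.2⟩
  -- ISYTpi part
  have hSYTpi : IsSYTpi lam n (addRow nu 1) n T' := by
    refine ⟨⟨?_, ?_, ?_, ?_⟩, ?_⟩
    · intro c hc
      rw [memNew] at hc
      push_neg at hc
      rw [hT'eq c hc.1]
      apply hT0
      exact hc.2
    · have hB1 : Set.BijOn T' (cells nu (n - 1) : Set (ℕ × ℕ)) (Set.Icc 1 (n - 1)) :=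
        hTbij.congr (fun c hc => (hT'old c (by exact_mod_cast hc)).symm)
      have hB2 := hB1.insert (a := nc) (by
        rw [hT'nc]; simp only [Set.mem_Icc]; omega)
      rw [hT'nc] at hB2
      have hs : (cells (addRow nu 1) n : Set (ℕ × ℕ))
          = insert nc (cells nu (n - 1) : Set (ℕ × ℕ)) := by
        rw [cellsEq, Finset.coe_insert]
      have ht : Set.Icc 1 n = insert n (Set.Icc 1 (n - 1)) := by
        ext k; simp only [Set.mem_Icc, Set.mem_insert_iff]; omega
      rw [hs, ht]
      exact hB2
    · intro c hc c' hc' hrow hcol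
      rw [memNew] at hc hc'
      rcases hc' with hc' | hc'
      · have hcold : c ∈ cells nu (n - 1) := by
          rcases hc with hc | hc
          · exfalso; rw [hc, hc'] at hcol; exact lt_irrefl _ hcol
          · exact hc
        rw [hc', hT'nc, hT'old c hcold]
        have := (Tval c hcold).2
        omega
      · have hcold : c ∈ cells nu (n - 1) := by
          rcases hc with hc | hc
          · exfalso
            have h1 := (rowPos c' hc').2.2
            have h2 := hnuA 1 c'.1 le_rfl (by
              have := (rowPos c' hc').1; omega)
            rw [hc] at hrow hcol
            simp only [hnc] at hrow hcol
            omega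
          · exact hc
        rw [hT'old c hcold, hT'old c' hc']
        exact hTrow c hcold c' hc' hrow hcol
    · intro c hc c' hc' hcol hrow
      rw [memNew] at hc hc'
      have hc'old : c' ∈ cells nu (n - 1) := by
        rcases hc' with hc' | hc'
        · exfalso
          have := (rowPos c (by
            rcases hc with hc | hc
            · exfalso; rw [hc, hc'] at hrow; exact lt_irrefl _ hrow
            · exact hc)).1
          rw [hc'] at hrow; simp only [hnc] at hrow; omega
        · exact hc'
      have hcold : c ∈ cells nu (n - 1) := by
        rcases hc with hc | hc
        · exfalso
          have h1 := (rowPos c' hc'old).2.2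
          have h2 := hnuA 1 c'.1 le_rfl (rowPos c' hc'old).1
          rw [hc] at hcol
          simp only [hnc] at hcol
          omega
        · exact hc
      rw [hT'old c hcold, hT'old c' hc'old]
      exact hTcol c hcold c' hc'old hcol hrow
    · intro c hc h2
      rw [memNew] at hc
      have hcold : c ∈ cells nu (n - 1) := by
        rcases hc with hc | hc
        · exfalso; rw [hc] at h2; simp [hnc] at h2
        · exact hc
      have hup : (c.1 - 1, c.2) ≠ nc := by
        intro h
        rw [Prod.ext_iff] at h
        simp only [hnc] at h
        have h1 := (rowPos c hcold).2.2
        have h3 := hnuA 1 c.1 le_rfl (by omega)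
        have h4 : c.1 = 2 := by omega
        omega
      rw [hT'old c hcold, hT'eq _ hup]
      have := hTpi c hcold h2
      rw [piLt_shift hn hAnti (Tval c hcold).2]
      exact this
  refine ⟨hSYTpi, ?_⟩
  -- weight part
  have gamEq : gam lam n (addRow nu 1) n T' = gam (shiftPart lam) (n - 1) nu (n - 1) T := by
    unfold gam
    congr 1
    ext p
    simp only [Finset.mem_filter, Finset.mem_product]
    constructor
    · rintro ⟨⟨h1, h2⟩, hrow, harea⟩
      rw [memNew] at h1 h2
      have h1old : p.1 ∈ cells nu (n - 1) := by
        rcases h1 with h1 | h1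
        · exfalso
          rcases h2 with h2 | h2
          · rw [h1, h2] at hrow; exact lt_irrefl _ hrow
          · have := (rowPos p.2 h2).1; rw [h1] at hrow; simp only [hnc] at hrow; omega
        · exact h1
      have h2old : p.2 ∈ cells nu (n - 1) := by
        rcases h2 with h2 | h2
        · exfalso
          rw [h2, hT'nc] at harea
          have := harea.1
          rw [hT'old p.1 h1old] at this
          have := (Tval p.1 h1old).2
          omega
        · exact h2
      rw [hT'old p.1 h1old, hT'old p.2 h2old] at harea
      refine ⟨⟨h1old, h2old⟩, hrow, ?_⟩
      rw [← inArea_shift hn hAnti (Tval p.1 h1old).2]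
      exact harea
    · rintro ⟨⟨h1, h2⟩, hrow, harea⟩
      refine ⟨⟨by rw [memNew]; right; exact h1, by rw [memNew]; right; exact h2⟩, hrow, ?_⟩
      rw [hT'old p.1 h1, hT'old p.2 h2]
      rw [inArea_shift hn hAnti (Tval p.1 h1).2]
      exact harea
  have filterEq : (cells (addRow nu 1) n).filter (fun b => 2 ≤ b.1)
      = (cells nu (n - 1)).filter (fun b => 2 ≤ b.1) := by
    rw [cellsEq, Finset.filter_insert]
    rw [if_neg (by simp [hnc])]
  have armEq : ∀ b ∈ (cells nu (n - 1)).filter (fun b => 2 ≤ b.1),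
      armLt lam n (addRow nu 1) n T' (b.1 - 1, b.2) (T' b)
        = armLt (shiftPart lam) (n - 1) nu (n - 1) T (b.1 - 1, b.2) (T b) := by
    intro b hb
    rw [Finset.mem_filter] at hb
    obtain ⟨hbold, hb2⟩ := hb
    have hbne : b ≠ nc := fun h => ncNotOld (h ▸ hbold)
    have hTb := Tval b hbold
    rw [hT'eq b hbne]
    unfold armLt
    congr 1
    ext c
    simp only [Finset.mem_filter]
    constructor
    · rintro ⟨hc, hr, hcol, hlt⟩
      rw [memNew] at hc
      have hcold : c ∈ cells nu (n - 1) := by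
        rcases hc with hc | hc
        · exfalso
          rw [hc, hT'nc] at hlt
          have := hlt.1
          omega
        · exact hc
      rw [hT'old c hcold] at hlt
      refine ⟨hcold, hr, hcol, ?_⟩
      rw [← piLt_shift hn hAnti hTb.2]
      exact hlt
    · rintro ⟨hc, hr, hcol, hlt⟩
      refine ⟨by rw [memNew]; right; exact hc, hr, hcol, ?_⟩
      rw [hT'old c hc]
      rw [piLt_shift hn hAnti hTb.2]
      exact hlt
  have armProdEq : armProd lam n (addRow nu 1) n T'
      = armProd (shiftPart lam) (n - 1) nu (n - 1) T := by
    unfold armProd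
    rw [filterEq]
    apply Finset.prod_congr rfl
    intro b hb
    rw [armEq b hb]
  have nconjEq : nConj (addRow nu 1) n = nConj nu (n - 1) + nu 1 := by
    unfold nConj
    have h1 : Finset.Icc 1 n = insert 1 (Finset.Icc 2 n) := by
      ext k; simp only [Finset.mem_Icc, Finset.mem_insert]; omega
    have h1n : (1 : ℕ) ∉ Finset.Icc 2 n := by simp
    have hrest : ∑ i ∈ Finset.Icc 2 n, Nat.choose (addRow nu 1 i) 2
        = ∑ i ∈ Finset.Icc 2 n, Nat.choose (nu i) 2 := by
      apply Finset.sum_congr rfl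
      intro i hi
      simp only [Finset.mem_Icc] at hi
      unfold addRow
      rw [if_neg (by omega)]
    have h2 : ∑ i ∈ Finset.Icc 1 n, Nat.choose (nu i) 2
        = ∑ i ∈ Finset.Icc 1 (n - 1), Nat.choose (nu i) 2 := by
      have : Finset.Icc 1 n = insert n (Finset.Icc 1 (n - 1)) := by
        ext k; simp only [Finset.mem_Icc, Finset.mem_insert]; omega
      rw [this, Finset.sum_insert (by simp only [Finset.mem_Icc]; omega)]
      rw [hz n (by omega)]
      simp
    rw [← h2, h1, Finset.sum_insert h1n, Finset.sum_insert h1n, hrest]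
    have h3 : addRow nu 1 1 = nu 1 + 1 := by simp [addRow]
    rw [h3]
    have h4 : Nat.choose (nu 1 + 1) 2 = Nat.choose (nu 1) 2 + nu 1 := by
      rw [show (2:ℕ) = 1 + 1 from rfl, Nat.choose_succ_succ', Nat.choose_one_right]
      omega
    omega
  unfold Wwt
  rw [gamEq, armProdEq, nconjEq]
  rw [show nConj nu (n - 1) + nu 1 + gam (shiftPart lam) (n - 1) nu (n - 1) T
      = nu 1 + (nConj nu (n - 1) + gam (shiftPart lam) (n - 1) nu (n - 1) T) by omega]
  rw [pow_add, mul_assoc]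
end
end

section
/- Let π be a Dyck path of semilength n and μ ⊢ n. If SYT^π_μ is nonempty, then for every k ≥ 1: μ'₁ + μ'₂ + ⋯ + μ'_k is at most the maximum cardinality of a union of k chains in the poset ({1,…,n}, <_π), where a chain is a subset of {1,…,n} totally ordered by <_π. (Equivalently, μ dominates the Greene shape P(π) of the poset <_π.) -/
open Finset Polynomial
open scoped Classical

noncomputable section

/-- `S` is a chain in the poset `({1,…,n}, <_π)`. -/
def IsChainPi (lam : ℕ → ℕ) (n : ℕ) (S : Finset ℕ) : Prop :=
  S ⊆ Finset.Icc 1 n ∧ ∀ a ∈ S, ∀ b ∈ S, a ≠ b → PiLt lam n a b ∨ PiLt lam n b a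

lemma conjPart_anti (lam : ℕ → ℕ) (n : ℕ) {a b : ℕ} (h : a ≤ b) :
    conjPart lam n b ≤ conjPart lam n a :=
  Finset.card_le_card (by
    intro i hi
    simp only [Finset.mem_filter] at hi ⊢
    exact ⟨hi.1, h.trans hi.2⟩)

lemma prod_ext' {a b : ℕ × ℕ} (h1 : a.1 = b.1) (h2 : a.2 = b.2) : a = b := by
  cases a; cases b; simp_all

lemma piLt_trans (lam : ℕ → ℕ) (n : ℕ) {a b c : ℕ} (h1 : PiLt lam n a b)
    (h2 : PiLt lam n b c) : PiLt lam n a c := by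
  obtain ⟨hab, _⟩ := h1
  obtain ⟨hbc, h2'⟩ := h2
  refine ⟨hab.trans hbc, fun h => ?_⟩
  exact h2' ⟨hbc, le_trans (add_le_add_right (conjPart_anti lam n hab.le) c) h.2⟩

lemma up_mem (n : ℕ) (mu : ℕ → ℕ) (hmu : IsPartitionOf n mu) {c : ℕ × ℕ}
    (hc : c ∈ cells mu n) (h2 : 2 ≤ c.1) : (c.1 - 1, c.2) ∈ cells mu n := by
  simp only [cells, Finset.mem_filter, Finset.mem_product, Finset.mem_Icc] at hc ⊢
  refine ⟨⟨⟨by omega, by omega⟩, hc.1.2⟩, ?_⟩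
  exact hc.2.trans (hmu.1 (c.1 - 1) c.1 (by omega) (by omega))

lemma row_ge_one (n : ℕ) (mu : ℕ → ℕ) {c : ℕ × ℕ} (hc : c ∈ cells mu n) : 1 ≤ c.1 := by
  simp only [cells, Finset.mem_filter, Finset.mem_product, Finset.mem_Icc] at hc
  exact hc.1.1.1

lemma col_chain (n : ℕ) (lam mu : ℕ → ℕ) (hmu : IsPartitionOf n mu)
    (T : ℕ × ℕ → ℕ) (hT : IsSYTpi lam n mu n T) :
    ∀ g : ℕ, ∀ c' c : ℕ × ℕ, c' ∈ cells mu n → c ∈ cells mu n →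
      c'.2 = c.2 → c'.1 < c.1 → c.1 - c'.1 = g + 1 → PiLt lam n (T c') (T c) := by
  intro g
  induction g with
  | zero =>
    intro c' c hc' hc h2 h1 hg
    have hge := row_ge_one n mu hc'
    have h2le : 2 ≤ c.1 := by omega
    have key := hT.2 c hc h2le
    have hcc : c' = (c.1 - 1, c.2) := prod_ext' (show c'.1 = c.1 - 1 by omega) h2
    rw [hcc]; exact key
  | succ g ih =>
    intro c' c hc' hc h2 h1 hg
    have hge := row_ge_one n mu hc'
    have h2le : 2 ≤ c.1 := by omega
    have hmid : (c.1 - 1, c.2) ∈ cells mu n := up_mem n mu hmu hc h2le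
    have h1' := ih c' (c.1 - 1, c.2) hc' hmid h2 (by omega) (by omega)
    exact piLt_trans lam n h1' (hT.2 c hc h2le)

lemma col_card (n : ℕ) (mu : ℕ → ℕ) (hmu : IsPartitionOf n mu) (j : ℕ) (hj : 1 ≤ j) :
    ((cells mu n).filter (fun c => c.2 = j)).card = conjPart mu n j := by
  rw [conjPart]
  apply Finset.card_bij (fun c _ => c.1)
  · intro c hc
    simp only [cells, Finset.mem_filter, Finset.mem_product, Finset.mem_Icc] at hc ⊢
    exact ⟨hc.1.1.1, hc.2 ▸ hc.1.2⟩
  · intro c hc c'' hc'' h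
    simp only [Finset.mem_filter] at hc hc''
    exact prod_ext' h (hc.2.trans hc''.2.symm)
  · intro i hi
    simp only [Finset.mem_filter, Finset.mem_Icc] at hi
    refine ⟨(i, j), Finset.mem_filter.2 ⟨?_, rfl⟩, rfl⟩
    simp only [cells, Finset.mem_filter, Finset.mem_product, Finset.mem_Icc]
    exact ⟨⟨⟨hi.1.1, hi.1.2⟩, hj, hi.2.trans (hmu.1 1 i le_rfl hi.1.1)⟩, hi.2⟩

/-- Lemma: if `SYT^π_μ ≠ ∅` then for every `k ≥ 1`, `μ'₁ + ⋯ + μ'_k` is at most the maximum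
cardinality of a union of `k` chains in `({1,…,n}, <_π)`; i.e. there exist `k` chains whose
union has at least `μ'₁ + ⋯ + μ'_k` elements. -/
theorem greene_dominance (n : ℕ) (lam : ℕ → ℕ)
    (hAnti : ∀ i j, 1 ≤ i → i ≤ j → lam j ≤ lam i)
    (hStair : ∀ i, 1 ≤ i → i ≤ n → lam i + i ≤ n)
    (mu : ℕ → ℕ) (hmu : IsPartitionOf n mu) (T : ℕ × ℕ → ℕ)
    (hT : IsSYTpi lam n mu n T) (k : ℕ) (hk : 1 ≤ k) :
    ∃ Cs : Fin k → Finset ℕ, (∀ a, IsChainPi lam n (Cs a)) ∧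
      ∑ j ∈ Finset.Icc 1 k, conjPart mu n j ≤ (Finset.univ.biUnion Cs).card := by
  refine ⟨fun a => ((cells mu n).filter (fun c => c.2 = a.1 + 1)).image T, ?_, ?_⟩
  · intro a
    constructor
    · intro x hx
      simp only [Finset.mem_image, Finset.mem_filter] at hx
      obtain ⟨c, ⟨hc, _⟩, rfl⟩ := hx
      have := hT.1.2.1.mapsTo hc
      simpa [Finset.mem_Icc] using this
    · intro x hx y hy hxy
      simp only [Finset.mem_image, Finset.mem_filter] at hx hy
      obtain ⟨c, ⟨hc, hc2⟩, rfl⟩ := hx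
      obtain ⟨c', ⟨hc', hc'2⟩, rfl⟩ := hy
      have hne : c ≠ c' := fun h => hxy (by rw [h])
      have h2 : c.2 = c'.2 := hc2.trans hc'2.symm
      have h1 : c.1 ≠ c'.1 := fun h => hne (prod_ext' h h2)
      rcases Nat.lt_or_ge c.1 c'.1 with h | h
      · exact Or.inl (col_chain n lam mu hmu T hT (c'.1 - c.1 - 1) c c' hc hc' h2 h
          (by omega))
      · have h' : c'.1 < c.1 := by omega
        exact Or.inr (col_chain n lam mu hmu T hT (c.1 - c'.1 - 1) c' c hc' hc h2.symm h'
          (by omega))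
  · set S : Finset (ℕ × ℕ) := (cells mu n).filter (fun c => c.2 ≤ k) with hS
    have hsub : S.image T ⊆
        Finset.univ.biUnion (fun a : Fin k =>
          ((cells mu n).filter (fun c => c.2 = a.1 + 1)).image T) := by
      intro x hx
      simp only [hS, Finset.mem_image, Finset.mem_filter] at hx
      obtain ⟨c, ⟨hc, hck⟩, rfl⟩ := hx
      have hc2 : 1 ≤ c.2 := by
        simp only [cells, Finset.mem_filter, Finset.mem_product, Finset.mem_Icc] at hc
        exact hc.1.2.1
      refine Finset.mem_biUnion.2 ⟨⟨c.2 - 1, by omega⟩, Finset.mem_univ _, ?_⟩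
      simp only [Finset.mem_image, Finset.mem_filter]
      exact ⟨c, ⟨hc, by omega⟩, rfl⟩
    have hcardim : (S.image T).card = S.card := by
      apply Finset.card_image_of_injOn
      exact hT.1.2.1.injOn.mono (by intro c hc; exact (Finset.mem_filter.1 hc).1)
    have hSdecomp : S = (Finset.Icc 1 k).biUnion
        (fun j => (cells mu n).filter (fun c => c.2 = j)) := by
      ext c
      simp only [hS, Finset.mem_filter, Finset.mem_biUnion, Finset.mem_Icc]
      constructor
      · rintro ⟨hc, hck⟩
        have hc2 : 1 ≤ c.2 := by
          simp only [cells, Finset.mem_filter, Finset.mem_product, Finset.mem_Icc] at hc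
          exact hc.1.2.1
        exact ⟨c.2, ⟨hc2, hck⟩, hc, rfl⟩
      · rintro ⟨j, ⟨hj1, hjk⟩, hc, rfl⟩
        exact ⟨hc, hjk⟩
    have hScard : S.card = ∑ j ∈ Finset.Icc 1 k, conjPart mu n j := by
      rw [hSdecomp, Finset.card_biUnion]
      · exact Finset.sum_congr rfl (fun j hj =>
          col_card n mu hmu j (Finset.mem_Icc.1 hj).1)
      · intro x _ y _ hxy
        simp only [Finset.disjoint_left, Finset.mem_filter]
        rintro c ⟨_, rfl⟩ ⟨_, h⟩
        exact hxy h
    calc ∑ j ∈ Finset.Icc 1 k, conjPart mu n j = (S.image T).card := by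
          rw [hcardim, hScard]
      _ ≤ _ := Finset.card_le_card hsub
end
end

section
/- Let m, n ≥ 0 and let λ be a partition contained in the m × n rectangle (i.e., λ₁ ≤ m and λ'₁ ≤ n). Let π be the Dyck path of semilength m+n with λ(π) = λ. Then the poset ({1,…,m+n}, <_π) contains no chain of length 3: there exist no i, j, k with i <_π j <_π k. (In particular, the Greene shape P(π) satisfies P(π)'₁ ≤ 2.) -/
open Finset Polynomial
open scoped Classical

noncomputable section

/-- Proposition: if `λ ⊆ (m^n)` (i.e. `λ₁ ≤ m` and `λ` has at most `n` parts) and `π` is the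
Dyck path of semilength `m + n` with `λ(π) = λ`, then the poset `({1,…,m+n}, <_π)` has no
chain of length 3. -/
theorem abelian_no_chain (m n : ℕ) (lam : ℕ → ℕ)
    (hAnti : ∀ i j, 1 ≤ i → i ≤ j → lam j ≤ lam i)
    (hcol : lam 1 ≤ m) (hrow : ∀ i, n < i → lam i = 0) :
    ∀ i j k, 1 ≤ i → k ≤ m + n →
      ¬ (PiLt lam (m + n) i j ∧ PiLt lam (m + n) j k) := by
  intro i j k hi hk ⟨⟨hij, hA1⟩, ⟨hjk, hA2⟩⟩
  -- From the second relation: conjPart lam (m+n) j ≥ 1, so j ≤ m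
  have h2 : m + n < k + conjPart lam (m + n) j := by
    by_contra h
    exact hA2 ⟨hjk, le_of_not_gt h⟩
  have hcj : 1 ≤ conjPart lam (m + n) j := by omega
  rw [show conjPart lam (m+n) j = ((Finset.Icc 1 (m+n)).filter fun t => j ≤ lam t).card from rfl] at hcj
  obtain ⟨t, htmem⟩ := Finset.card_pos.mp hcj
  rw [Finset.mem_filter, Finset.mem_Icc] at htmem
  have hjm : j ≤ m := le_trans htmem.2 (le_trans (hAnti 1 t le_rfl htmem.1.1) hcol)
  -- From the first relation: conjPart lam (m+n) i ≤ n, so j > m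
  have h1 : m + n < j + conjPart lam (m + n) i := by
    by_contra h
    exact hA1 ⟨hij, le_of_not_gt h⟩
  have hci : conjPart lam (m + n) i ≤ n := by
    have : ((Finset.Icc 1 (m + n)).filter fun t => i ≤ lam t) ⊆ Finset.Icc 1 n := by
      intro t ht
      rw [Finset.mem_filter, Finset.mem_Icc] at ht
      rw [Finset.mem_Icc]
      refine ⟨ht.1.1, ?_⟩
      by_contra h
      have := hrow t (by omega)
      omega
    calc conjPart lam (m + n) i ≤ (Finset.Icc 1 n).card := Finset.card_le_card this
      _ = n := by simp
  omega
end
end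

section
/- Let n ≥ 1 and let λ be a partition with λ_j ≤ n − j for all j (so λ fits above the staircase in the n × n square). Let λ^c be the complementary partition of λ in the n × n square, i.e., λ^c_i = n − λ_{n+1−i} for 1 ≤ i ≤ n. Then the n-th Garsia–Remmel q-rook number of λ^c satisfies R_n(λ^c;q) = ∏_{j=1}^{n} [n − λ_j − j + 1]_q. -/
open Finset Polynomial
open scoped Classical

noncomputable section

namespace LastRookAux

def fcol (j k : ℕ) : ℕ := if k < j then k else k + 1
def gcol (j k : ℕ) : ℕ := if k < j then k else k - 1
def fcell (j : ℕ) (c : ℕ × ℕ) : ℕ × ℕ := (c.1, fcol j c.2)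
def gcell (j : ℕ) (c : ℕ × ℕ) : ℕ × ℕ := (c.1, gcol j c.2)

lemma fcol_inj {j : ℕ} : Function.Injective (fcol j) := by
  intro a b h; unfold fcol at h; split_ifs at h <;> omega

lemma fcol_le {j a b : ℕ} : fcol j a ≤ fcol j b ↔ a ≤ b := by
  unfold fcol; split_ifs <;> omega

lemma fcol_ne (j a : ℕ) : fcol j a ≠ j := by
  unfold fcol; split_ifs <;> omega

lemma gcol_fcol (j a : ℕ) : gcol j (fcol j a) = a := by
  unfold fcol gcol; split_ifs <;> omega

lemma fcol_gcol {j k : ℕ} (h : k ≠ j) : fcol j (gcol j k) = k := by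
  unfold fcol gcol; split_ifs <;> omega

lemma fcell_inj {j : ℕ} : Function.Injective (fcell j) := by
  rintro ⟨a1, a2⟩ ⟨b1, b2⟩ h
  simp only [fcell, Prod.mk.injEq] at h
  exact Prod.ext h.1 (fcol_inj h.2)

lemma fcell_fst (j : ℕ) (c : ℕ × ℕ) : (fcell j c).1 = c.1 := rfl

lemma mem_cells {lam : ℕ → ℕ} {rows : ℕ} {c : ℕ × ℕ} :
    c ∈ cells lam rows ↔
      (1 ≤ c.1 ∧ c.1 ≤ rows) ∧ (1 ≤ c.2 ∧ c.2 ≤ lam 1) ∧ c.2 ≤ lam c.1 := by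
  simp [cells, Finset.mem_filter, Finset.mem_product, Finset.mem_Icc, and_assoc]

lemma exists_row {μ : ℕ → ℕ} {m : ℕ} {C : Finset (ℕ × ℕ)}
    (hsub : C ⊆ cells μ m) (hcard : C.card = m) (hna : NonAttacking C)
    {i : ℕ} (h1 : 1 ≤ i) (h2 : i ≤ m) : ∃ c ∈ C, c.1 = i := by
  have hinj : Set.InjOn Prod.fst (C : Set (ℕ × ℕ)) := by
    intro a ha b hb hab
    by_contra hne
    exact (hna a ha b hb hne).1 hab
  have himg : C.image Prod.fst = Finset.Icc 1 m := by
    apply Finset.eq_of_subset_of_card_le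
    · intro x hx
      simp only [Finset.mem_image] at hx
      obtain ⟨c, hc, rfl⟩ := hx
      have h := mem_cells.1 (hsub hc)
      simp only [Finset.mem_Icc]
      omega
    · rw [Finset.card_image_of_injOn hinj, hcard, Nat.card_Icc]
      omega
  have : i ∈ C.image Prod.fst := by
    rw [himg]; simp only [Finset.mem_Icc]; omega
  simpa using this

section Step

variable (n : ℕ) (μ : ℕ → ℕ)

lemma mu_facts (hA : ∀ i j, 1 ≤ i → i ≤ j → j ≤ n + 1 → μ j ≤ μ i)
    (hB : ∀ i, 1 ≤ i → i ≤ n + 1 → n + 2 ≤ μ i + i)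
    {i : ℕ} (h1 : 1 ≤ i) (h2 : i ≤ n + 1) :
    μ (n+1) ≤ μ i ∧ μ i ≤ μ 1 ∧ 1 ≤ μ i := by
  refine ⟨hA i (n+1) h1 h2 le_rfl, hA 1 i le_rfl h1 h2, ?_⟩
  have := hB i h1 h2; omega

lemma inv_step
    (hA : ∀ i j, 1 ≤ i → i ≤ j → j ≤ n + 1 → μ j ≤ μ i)
    (hB : ∀ i, 1 ≤ i → i ≤ n + 1 → n + 2 ≤ μ i + i)
    {j : ℕ} (hj1 : 1 ≤ j) (hj2 : j ≤ μ (n+1))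
    {C' : Finset (ℕ × ℕ)} (hsub : C' ⊆ cells (fun i => μ i - 1) n)
    (hna : NonAttacking C') :
    rookInv μ (n+1) (insert (n+1, j) (C'.image (fcell j)))
      = (μ (n+1) - j) + rookInv (fun i => μ i - 1) n C' := by
  classical
  set C : Finset (ℕ × ℕ) := insert (n+1, j) (C'.image (fcell j)) with hCdef
  have hC'mem : ∀ c' ∈ C', (1 ≤ c'.1 ∧ c'.1 ≤ n) ∧ 1 ≤ c'.2 ∧ c'.2 + 1 ≤ μ c'.1 := by
    intro c' hc'
    have h := mem_cells.1 (hsub hc')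
    have h1 : 1 ≤ μ c'.1 := (mu_facts n μ hA hB h.1.1 (by omega)).2.2
    omega
  have hrook : ((n+1 : ℕ), j) ∈ C := Finset.mem_insert_self _ _
  set strip : Finset (ℕ × ℕ) :=
    (Finset.Icc (j+1) (μ (n+1))).image (fun k => ((n+1 : ℕ), k)) with hstrip
  set inner : Finset (ℕ × ℕ) :=
    ((cells (fun i => μ i - 1) n).filter fun c => c ∉ C' ∧
      (∀ r ∈ C', r.2 = c.2 → r.1 ≤ c.1) ∧ (∀ r ∈ C', r.1 = c.1 → r.2 ≤ c.2)).image
      (fcell j) with hinner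
  have hset : ((cells μ (n+1)).filter fun c => c ∉ C ∧
      (∀ r ∈ C, r.2 = c.2 → r.1 ≤ c.1) ∧ (∀ r ∈ C, r.1 = c.1 → r.2 ≤ c.2))
      = inner ∪ strip := by
    ext c
    simp only [hinner, hstrip, Finset.mem_union, Finset.mem_image, Finset.mem_filter,
      Finset.mem_Icc]
    constructor
    · rintro ⟨hcell, hnotin, hcol, hrow⟩
      obtain ⟨i, k⟩ := c
      have hcm := mem_cells.1 hcell
      simp only at hcm
      by_cases hi : i = n + 1
      · -- strip case
        subst hi
        have hjk : j ≤ k := hrow _ hrook rfl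
        have hkj : k ≠ j := fun h => hnotin (by rw [h]; exact hrook)
        right
        exact ⟨k, ⟨by omega, by simpa using hcm.2.2⟩, rfl⟩
      · -- inner case
        have hin : i ≤ n := by omega
        have hiμ := mu_facts n μ hA hB hcm.1.1 hcm.1.2
        have hkne : k ≠ j := by
          intro h
          have := hcol _ hrook (by simpa using h.symm)
          simp only at this
          omega
        have hgood : fcell j (i, gcol j k) = (i, k) := by
          simp [fcell, fcol_gcol hkne]
        left
        refine ⟨(i, gcol j k), ⟨?_, ?_, ?_, ?_⟩, hgood⟩
        · rw [mem_cells]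
          simp only
          have hμ1 : μ (n+1) ≤ μ 1 := le_trans hiμ.1 hiμ.2.1
          refine ⟨⟨?_, hin⟩, ⟨?_, ?_⟩, ?_⟩
          · omega
          · unfold gcol; split_ifs <;> omega
          · unfold gcol; split_ifs <;> omega
          · unfold gcol; split_ifs <;> omega
        · intro hmem
          have h2 : fcell j (i, gcol j k) ∈ C :=
            Finset.mem_insert_of_mem (Finset.mem_image_of_mem _ hmem)
          rw [hgood] at h2
          exact hnotin h2
        · -- column condition
          intro r' hr' hcol'
          have hrC : fcell j r' ∈ C :=
            Finset.mem_insert_of_mem (Finset.mem_image_of_mem _ hr')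
          have h2 : (fcell j r').2 = k := by
            show fcol j r'.2 = k
            have h3 : r'.2 = gcol j k := hcol'
            rw [h3, fcol_gcol hkne]
          have h4 := hcol _ hrC h2
          exact h4
        · -- row condition
          intro r' hr' hrow'
          have hrC : fcell j r' ∈ C :=
            Finset.mem_insert_of_mem (Finset.mem_image_of_mem _ hr')
          have h2 := hrow _ hrC hrow'
          have h3 : fcol j r'.2 ≤ fcol j (gcol j k) := by
            rw [fcol_gcol hkne]; exact h2
          exact fcol_le.1 h3
    · rintro (⟨c', ⟨hc'cell, hc'notin, hc'col, hc'row⟩, rfl⟩ | ⟨k', ⟨hk1, hk2⟩, rfl⟩)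
      · -- inner case
        obtain ⟨i', k'⟩ := c'
        have hcm := mem_cells.1 hc'cell
        simp only at hcm
        have hiμ := mu_facts n μ hA hB hcm.1.1 (by omega)
        have hkb : 1 ≤ fcol j k' ∧ fcol j k' ≤ μ i' := by
          unfold fcol; split_ifs <;> omega
        refine ⟨?_, ?_, ?_, ?_⟩
        · rw [mem_cells]
          simp only [fcell]
          exact ⟨⟨hcm.1.1, by omega⟩, ⟨hkb.1, le_trans hkb.2 hiμ.2.1⟩, hkb.2⟩
        · intro hmem
          rcases Finset.mem_insert.1 hmem with h | h
          · have : i' = n + 1 := congrArg Prod.fst h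
            omega
          · obtain ⟨d, hd, hde⟩ := Finset.mem_image.1 h
            have := fcell_inj hde
            rw [this] at hd
            exact hc'notin hd
        · intro r hr hcol'
          rcases Finset.mem_insert.1 hr with h | h
          · subst h
            have : j = fcol j k' := hcol'
            exact absurd this.symm (fcol_ne j k')
          · obtain ⟨d, hd, rfl⟩ := Finset.mem_image.1 h
            have h2 : fcol j d.2 = fcol j k' := hcol'
            exact hc'col d hd (fcol_inj h2)
        · intro r hr hrow'
          rcases Finset.mem_insert.1 hr with h | h
          · subst h
            have : n + 1 = i' := hrow'
            omega
          · obtain ⟨d, hd, rfl⟩ := Finset.mem_image.1 h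
            have h2 : d.1 = i' := hrow'
            exact fcol_le.2 (hc'row d hd h2)
      · -- strip case
        have hμ1 : μ (n+1) ≤ μ 1 := (mu_facts n μ hA hB (by omega) le_rfl).2.1
        refine ⟨?_, ?_, ?_, ?_⟩
        · rw [mem_cells]
          exact ⟨⟨by omega, le_rfl⟩, ⟨by omega, by omega⟩, hk2⟩
        · intro hmem
          rcases Finset.mem_insert.1 hmem with h | h
          · have : k' = j := (Prod.mk.injEq _ _ _ _ ▸ h).2
            omega
          · obtain ⟨d, hd, hde⟩ := Finset.mem_image.1 h
            have hd1 := (hC'mem d hd).1.2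
            have : d.1 = n + 1 := congrArg Prod.fst hde
            omega
        · intro r hr _
          rcases Finset.mem_insert.1 hr with h | h
          · subst h; exact le_rfl
          · obtain ⟨d, hd, rfl⟩ := Finset.mem_image.1 h
            have := (hC'mem d hd).1.2
            show d.1 ≤ n + 1
            omega
        · intro r hr hrow'
          rcases Finset.mem_insert.1 hr with h | h
          · subst h
            show j ≤ k'
            omega
          · obtain ⟨d, hd, rfl⟩ := Finset.mem_image.1 h
            have := (hC'mem d hd).1.2
            have h2 : d.1 = n + 1 := hrow'
            omega
  rw [rookInv, hset, Finset.card_union_of_disjoint, rookInv]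
  · rw [hinner, Finset.card_image_of_injective _ fcell_inj, hstrip,
      Finset.card_image_of_injective, Nat.card_Icc]
    · omega
    · intro a b h
      exact (Prod.mk.injEq _ _ _ _ ▸ h).2
  · rw [Finset.disjoint_left]
    intro a ha hb
    rw [hinner] at ha
    rw [hstrip] at hb
    obtain ⟨d, hd, rfl⟩ := Finset.mem_image.1 ha
    obtain ⟨k', _, hk⟩ := Finset.mem_image.1 hb
    have h1 := (mem_cells.1 (Finset.mem_filter.1 hd).1).1.2
    have h2 : n + 1 = (fcell j d).1 := congrArg Prod.fst hk
    rw [fcell_fst] at h2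
    omega

lemma step_mem
    (hA : ∀ i j, 1 ≤ i → i ≤ j → j ≤ n + 1 → μ j ≤ μ i)
    (hB : ∀ i, 1 ≤ i → i ≤ n + 1 → n + 2 ≤ μ i + i)
    {j : ℕ} (hj1 : 1 ≤ j) (hj2 : j ≤ μ (n+1))
    {C' : Finset (ℕ × ℕ)} (hsub : C' ⊆ cells (fun i => μ i - 1) n)
    (hcard : C'.card = n) (hna : NonAttacking C') :
    insert (n+1, j) (C'.image (fcell j)) ∈
      (Finset.powersetCard (n+1) (cells μ (n+1))).filter NonAttacking := by
  classical
  have hC'mem : ∀ c' ∈ C', (1 ≤ c'.1 ∧ c'.1 ≤ n) ∧ 1 ≤ c'.2 ∧ c'.2 + 1 ≤ μ c'.1 := by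
    intro c' hc'
    have h := mem_cells.1 (hsub hc')
    have h1 : 1 ≤ μ c'.1 := (mu_facts n μ hA hB h.1.1 (by omega)).2.2
    omega
  have hnotin : ((n+1:ℕ), j) ∉ C'.image (fcell j) := by
    intro h
    obtain ⟨d, hd, hde⟩ := Finset.mem_image.1 h
    have h1 : d.1 = n + 1 := congrArg Prod.fst hde
    have := (hC'mem d hd).1.2
    omega
  rw [Finset.mem_filter, Finset.mem_powersetCard]
  refine ⟨⟨?_, ?_⟩, ?_⟩
  · intro c hc
    rcases Finset.mem_insert.1 hc with rfl | h
    · rw [mem_cells]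
      have hμ1 : μ (n+1) ≤ μ 1 := (mu_facts n μ hA hB (by omega) le_rfl).2.1
      exact ⟨⟨by omega, le_rfl⟩, ⟨by omega, by omega⟩, hj2⟩
    · obtain ⟨d, hd, rfl⟩ := Finset.mem_image.1 h
      have hdm := hC'mem d hd
      have hiμ := mu_facts n μ hA hB hdm.1.1 (by omega)
      rw [mem_cells]
      simp only [fcell]
      have hb : 1 ≤ fcol j d.2 ∧ fcol j d.2 ≤ μ d.1 := by
        unfold fcol; split_ifs <;> omega
      exact ⟨⟨hdm.1.1, by omega⟩, ⟨hb.1, le_trans hb.2 hiμ.2.1⟩, hb.2⟩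
  · rw [Finset.card_insert_of_notMem hnotin,
      Finset.card_image_of_injective _ fcell_inj, hcard]
  · intro a ha b hb hne
    rcases Finset.mem_insert.1 ha with rfl | ha' <;>
      rcases Finset.mem_insert.1 hb with rfl | hb'
    · exact absurd rfl hne
    · obtain ⟨d, hd, rfl⟩ := Finset.mem_image.1 hb'
      have := (hC'mem d hd).1.2
      constructor
      · show n + 1 ≠ (fcell j d).1
        simp only [fcell]
        omega
      · show j ≠ (fcell j d).2
        exact fun h => (fcol_ne j d.2) h.symm
    · obtain ⟨d, hd, rfl⟩ := Finset.mem_image.1 ha'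
      have := (hC'mem d hd).1.2
      constructor
      · show (fcell j d).1 ≠ n + 1
        simp only [fcell]
        omega
      · show (fcell j d).2 ≠ j
        exact fcol_ne j d.2
    · obtain ⟨d, hd, rfl⟩ := Finset.mem_image.1 ha'
      obtain ⟨e, he, rfl⟩ := Finset.mem_image.1 hb'
      have hde : d ≠ e := fun h => hne (by rw [h])
      have h2 := hna d hd e he hde
      exact ⟨h2.1, fun h => h2.2 (fcol_inj h)⟩

lemma sum_pow_rev (m : ℕ) :
    ∑ j ∈ Finset.Icc 1 m, (Polynomial.X : Polynomial ℤ) ^ (m - j) = qInt m := by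
  rw [qInt]
  apply Finset.sum_nbij' (i := fun j => m - j) (j := fun t => m - t)
  · intro a ha; simp only [Finset.mem_Icc] at ha; simp only [Finset.mem_range]; omega
  · intro a ha; simp only [Finset.mem_range] at ha; simp only [Finset.mem_Icc]; omega
  · intro a ha; simp only [Finset.mem_Icc] at ha; omega
  · intro a ha; simp only [Finset.mem_range] at ha; omega
  · intro a _; rfl

lemma qRook_succ
    (hA : ∀ i j, 1 ≤ i → i ≤ j → j ≤ n + 1 → μ j ≤ μ i)
    (hB : ∀ i, 1 ≤ i → i ≤ n + 1 → n + 2 ≤ μ i + i) :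
    qRook μ (n+1) (n+1) = qInt (μ (n+1)) * qRook (fun i => μ i - 1) n n := by
  classical
  have key :
      ∑ p ∈ (Finset.Icc 1 (μ (n+1)) ×ˢ
          ((Finset.powersetCard n (cells (fun i => μ i - 1) n)).filter NonAttacking)),
        (Polynomial.X : Polynomial ℤ) ^
          ((μ (n+1) - p.1) + rookInv (fun i => μ i - 1) n p.2)
      = qRook μ (n+1) (n+1) := by
    rw [qRook]
    apply Finset.sum_bij (fun p _ => insert (n+1, p.1) (p.2.image (fcell p.1)))
    · rintro ⟨j, C'⟩ hp
      rw [Finset.mem_product, Finset.mem_Icc, Finset.mem_filter,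
        Finset.mem_powersetCard] at hp
      exact step_mem n μ hA hB hp.1.1 hp.1.2 hp.2.1.1 hp.2.1.2 hp.2.2
    · rintro ⟨j₁, C₁⟩ hp₁ ⟨j₂, C₂⟩ hp₂ heq
      rw [Finset.mem_product, Finset.mem_Icc, Finset.mem_filter,
        Finset.mem_powersetCard] at hp₁ hp₂
      simp only at heq
      have hrow : ∀ (C : Finset (ℕ×ℕ)), C ⊆ cells (fun i => μ i - 1) n →
          ∀ {j' : ℕ} {x : ℕ × ℕ}, x ∈ C.image (fcell j') → x.1 ≤ n := by
        intro C hsubC j' x hx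
        obtain ⟨d, hd, rfl⟩ := Finset.mem_image.1 hx
        have := (mem_cells.1 (hsubC hd)).1.2
        simpa [fcell] using this
      have hj12 : j₁ = j₂ := by
        have h1 : ((n+1:ℕ), j₁) ∈ insert ((n+1:ℕ), j₂) (C₂.image (fcell j₂)) := by
          rw [← heq]; exact Finset.mem_insert_self _ _
        rcases Finset.mem_insert.1 h1 with h | h
        · exact (Prod.mk.injEq _ _ _ _ ▸ h).2
        · have := hrow C₂ hp₂.2.1.1 h
          omega
      subst hj12
      have himg : ∀ x, x ∈ C₁.image (fcell j₁) ↔ x ∈ C₂.image (fcell j₁) := by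
        intro x
        constructor
        · intro hx
          have hx1 : x.1 ≤ n := hrow C₁ hp₁.2.1.1 hx
          have h2 : x ∈ insert ((n+1:ℕ), j₁) (C₂.image (fcell j₁)) := by
            rw [← heq]; exact Finset.mem_insert_of_mem hx
          rcases Finset.mem_insert.1 h2 with h | h
          · subst h; simp only at hx1; omega
          · exact h
        · intro hx
          have hx1 : x.1 ≤ n := hrow C₂ hp₂.2.1.1 hx
          have h2 : x ∈ insert ((n+1:ℕ), j₁) (C₁.image (fcell j₁)) := by
            rw [heq]; exact Finset.mem_insert_of_mem hx
          rcases Finset.mem_insert.1 h2 with h | h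
          · subst h; simp only at hx1; omega
          · exact h
      have hC12 : C₁ = C₂ := Finset.image_injective fcell_inj (Finset.ext himg)
      exact congrArg (Prod.mk j₁) hC12
    · -- surjectivity
      intro C hC
      rw [Finset.mem_filter, Finset.mem_powersetCard] at hC
      obtain ⟨⟨hsub, hcard⟩, hna⟩ := hC
      obtain ⟨c, hc, hc1⟩ := exists_row hsub hcard hna (i := n+1) (by omega) le_rfl
      have hccell := mem_cells.1 (hsub hc)
      set j := c.2 with hjdef
      have hcrow : c = ((n+1:ℕ), j) := by
        rw [hjdef, ← hc1]
      have hj1 : 1 ≤ j := hccell.2.1.1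
      have hj2 : j ≤ μ (n+1) := by
        have h2 := hccell.2.2
        rw [hc1] at h2
        exact h2
      set D := C.erase c with hD
      have hDfacts : ∀ d ∈ D, d.1 ≤ n ∧ d.2 ≠ j ∧ d ∈ C := by
        intro d hd
        have hd' := Finset.mem_of_mem_erase hd
        have hne := Finset.ne_of_mem_erase hd
        have h2 := hna d hd' c hc hne
        have h3 := (mem_cells.1 (hsub hd')).1.2
        have h4 := h2.1
        have h5 := h2.2
        exact ⟨by omega, h5, hd'⟩
      have hDinj : Set.InjOn (gcell j) (D : Set (ℕ × ℕ)) := by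
        intro a ha b hb hab
        by_contra hne
        have h9 := congrArg Prod.fst hab
        simp only [gcell] at h9
        exact (hna a (hDfacts a ha).2.2 b (hDfacts b hb).2.2 hne).1 h9
      have hgf : ∀ d ∈ D, fcell j (gcell j d) = d := by
        intro d hd
        have h2 := (hDfacts d hd).2.1
        obtain ⟨d1, d2⟩ := d
        simp only [fcell, gcell, Prod.mk.injEq]
        exact ⟨trivial, fcol_gcol h2⟩
      set C'' := D.image (gcell j) with hC''
      have hsub'' : C'' ⊆ cells (fun i => μ i - 1) n := by
        intro x hx
        obtain ⟨d, hd, rfl⟩ := Finset.mem_image.1 hx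
        obtain ⟨hd1, hd2, hd3⟩ := hDfacts d hd
        have hcm := mem_cells.1 (hsub hd3)
        have hiμ := mu_facts n μ hA hB hcm.1.1 hcm.1.2
        have h6 : j ≤ μ d.1 := le_trans hj2 hiμ.1
        rw [mem_cells]
        simp only [gcell]
        have hb : 1 ≤ gcol j d.2 ∧ gcol j d.2 ≤ μ d.1 - 1 := by
          have h5 := hcm.2
          unfold gcol; split_ifs <;> omega
        have h7 : μ d.1 ≤ μ 1 := hiμ.2.1
        exact ⟨⟨hcm.1.1, hd1⟩, ⟨hb.1, by omega⟩, hb.2⟩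
      have hcard'' : C''.card = n := by
        rw [hC'', Finset.card_image_of_injOn hDinj, hD,
          Finset.card_erase_of_mem hc, hcard]
        omega
      have hna'' : NonAttacking C'' := by
        intro a ha b hb hne
        obtain ⟨d, hd, rfl⟩ := Finset.mem_image.1 ha
        obtain ⟨e, he, rfl⟩ := Finset.mem_image.1 hb
        have hde : d ≠ e := fun h => hne (by rw [h])
        have h2 := hna d (hDfacts d hd).2.2 e (hDfacts e he).2.2 hde
        refine ⟨h2.1, ?_⟩
        intro h
        have h' : gcol j d.2 = gcol j e.2 := h
        have hd2 := (hDfacts d hd).2.1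
        have he2 := (hDfacts e he).2.1
        have heq2 : d.2 = e.2 := by
          have h3 := congrArg (fcol j) h'
          rwa [fcol_gcol hd2, fcol_gcol he2] at h3
        exact h2.2 heq2
      refine ⟨(j, C''), ?_, ?_⟩
      · rw [Finset.mem_product, Finset.mem_Icc, Finset.mem_filter,
          Finset.mem_powersetCard]
        exact ⟨⟨hj1, hj2⟩, ⟨hsub'', hcard''⟩, hna''⟩
      · have himg : C''.image (fcell j) = D := by
          rw [hC'', Finset.image_image]
          have h2 : Finset.image (fcell j ∘ gcell j) D = Finset.image id D :=
            Finset.image_congr (fun d hd => hgf d hd)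
          rw [h2, Finset.image_id]
        show insert ((n+1:ℕ), j) (C''.image (fcell j)) = C
        rw [himg, ← hcrow, hD, Finset.insert_erase hc]
    · rintro ⟨j, C'⟩ hp
      rw [Finset.mem_product, Finset.mem_Icc, Finset.mem_filter,
        Finset.mem_powersetCard] at hp
      simp only
      rw [inv_step n μ hA hB hp.1.1 hp.1.2 hp.2.1.1 hp.2.2]
  rw [← key, Finset.sum_product]
  have hinner : ∀ j : ℕ,
      (∑ C' ∈ (Finset.powersetCard n (cells (fun i => μ i - 1) n)).filter NonAttacking,
        (Polynomial.X : Polynomial ℤ) ^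
          ((μ (n+1) - j) + rookInv (fun i => μ i - 1) n C'))
      = (Polynomial.X : Polynomial ℤ) ^ (μ (n+1) - j) * qRook (fun i => μ i - 1) n n := by
    intro j
    rw [qRook, Finset.mul_sum]
    exact Finset.sum_congr rfl (fun C' _ => pow_add _ _ _)
  rw [Finset.sum_congr rfl (fun j _ => hinner j), ← Finset.sum_mul, sum_pow_rev]

lemma qRook_full : ∀ (n : ℕ) (μ : ℕ → ℕ),
    (∀ i j, 1 ≤ i → i ≤ j → j ≤ n → μ j ≤ μ i) →
    (∀ i, 1 ≤ i → i ≤ n → n + 1 ≤ μ i + i) →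
    qRook μ n n = ∏ i ∈ Finset.Icc 1 n, qInt (μ i + i - n) := by
  intro n
  induction n with
  | zero =>
    intro μ _ _
    simp [qRook, cells, rookInv, NonAttacking, Finset.filter_singleton]
  | succ n ih =>
    intro μ hA hB
    rw [qRook_succ n μ hA hB,
      ih (fun i => μ i - 1)
        (fun i j h1 h2 h3 => by
          have := hA i j h1 h2 (by omega); omega)
        (fun i h1 h2 => by
          have := hB i h1 (by omega); omega)]
    rw [Finset.prod_Icc_succ_top (by omega : 1 ≤ n + 1)]
    have h1 : μ (n+1) + (n+1) - (n+1) = μ (n+1) := by omega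
    rw [h1]
    have h2 : (∏ i ∈ Finset.Icc 1 n, qInt ((fun i => μ i - 1) i + i - n))
        = ∏ i ∈ Finset.Icc 1 n, qInt (μ i + i - (n+1)) := by
      refine Finset.prod_congr rfl (fun i hi => ?_)
      simp only [Finset.mem_Icc] at hi
      have := hB i hi.1 (by omega)
      congr 1
      simp only
      omega
    rw [h2, mul_comm]

end Step

end LastRookAux


/-- Proposition: if `λ_j ≤ n − j` for all `j` and `λ^c` is the complement of `λ` in the
`n × n` square (`λ^c_i = n − λ_{n+1−i}`), then
`R_n(λ^c; q) = ∏_{j=1}^{n} [n − λ_j − j + 1]_q`. -/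
theorem last_rook_product (n : ℕ) (hn : 1 ≤ n) (lam : ℕ → ℕ)
    (hAnti : ∀ i j, 1 ≤ i → i ≤ j → lam j ≤ lam i)
    (hStair : ∀ j, 1 ≤ j → j ≤ n → lam j + j ≤ n) :
    qRook (fun i => if 1 ≤ i ∧ i ≤ n then n - lam (n + 1 - i) else 0) n n =
      ∏ j ∈ Finset.Icc 1 n, qInt (n + 1 - (lam j + j)) := by
  have hval : ∀ i, 1 ≤ i → i ≤ n →
      (if 1 ≤ i ∧ i ≤ n then n - lam (n + 1 - i) else 0) = n - lam (n + 1 - i) := by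
    intro i h1 h2
    rw [if_pos ⟨h1, h2⟩]
  have hA' : ∀ i j, 1 ≤ i → i ≤ j → j ≤ n →
      (if 1 ≤ j ∧ j ≤ n then n - lam (n + 1 - j) else 0) ≤
        (if 1 ≤ i ∧ i ≤ n then n - lam (n + 1 - i) else 0) := by
    intro i j h1 h2 h3
    rw [hval i h1 (le_trans h2 h3), hval j (le_trans h1 h2) h3]
    have := hAnti (n + 1 - j) (n + 1 - i) (by omega) (by omega)
    omega
  have hB' : ∀ i, 1 ≤ i → i ≤ n →
      n + 1 ≤ (if 1 ≤ i ∧ i ≤ n then n - lam (n + 1 - i) else 0) + i := by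
    intro i h1 h2
    rw [hval i h1 h2]
    have := hStair (n + 1 - i) (by omega) (by omega)
    omega
  rw [LastRookAux.qRook_full n _ hA' hB']
  apply Finset.prod_nbij' (i := fun i => n + 1 - i) (j := fun j => n + 1 - j)
  · intro a ha; simp only [Finset.mem_Icc] at ha ⊢; omega
  · intro a ha; simp only [Finset.mem_Icc] at ha ⊢; omega
  · intro a ha; simp only [Finset.mem_Icc] at ha; omega
  · intro a ha; simp only [Finset.mem_Icc] at ha; omega
  · intro a ha
    simp only [Finset.mem_Icc] at ha
    rw [hval a ha.1 ha.2]
    have := hStair (n + 1 - a) (by omega) (by omega)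
    congr 1
    omega
end
end

section
/- Define G on Dyck paths by G(σ) = ∏_{j=1}^{s} [s − λ(σ)_j − j + 1]_q, where s is the semilength of σ. Then G is multiplicative: for any Dyck paths π of semilength n and η of semilength m, G(π·η) = G(π) · G(η), i.e., ∏_{j=1}^{n+m} [(n+m) − λ(π·η)_j − j + 1]_q = ∏_{j=1}^{n} [n − λ(π)_j − j + 1]_q · ∏_{j=1}^{m} [m − λ(η)_j − j + 1]_q. -/
open Finset Polynomial
open scoped Classical

noncomputable section

/-- Lemma: `G` is multiplicative. For Dyck paths `π` (semilength `n`, partition `lam`) and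
`η` (semilength `m`, partition `mu`), the partition of the concatenation `π·η` has parts
`mu j + n` for `1 ≤ j ≤ m` followed by `lam j` for `1 ≤ j ≤ n`, and
`G(π·η) = G(π) · G(η)`. -/
theorem G_multiplicative (n m : ℕ) (lam mu : ℕ → ℕ)
    (hAl : ∀ i j, 1 ≤ i → i ≤ j → lam j ≤ lam i)
    (hSl : ∀ j, 1 ≤ j → j ≤ n → lam j + j ≤ n)
    (hAm : ∀ i j, 1 ≤ i → i ≤ j → mu j ≤ mu i)
    (hSm : ∀ j, 1 ≤ j → j ≤ m → mu j + j ≤ m) :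
    (∏ j ∈ Finset.Icc 1 (n + m),
        qInt ((n + m) + 1 - ((if j ≤ m then mu j + n else lam (j - m)) + j))) =
      (∏ j ∈ Finset.Icc 1 n, qInt (n + 1 - (lam j + j))) *
        ∏ j ∈ Finset.Icc 1 m, qInt (m + 1 - (mu j + j)) := by
  have hIcc : ∀ k : ℕ, Finset.Icc 1 k = Finset.Ioc 0 k := by
    intro k; ext x; simp [Nat.lt_iff_add_one_le]
  rw [hIcc, hIcc, hIcc,
    ← Finset.prod_Ioc_consecutive _ (Nat.zero_le m) (Nat.le_add_left m n)]
  rw [mul_comm]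
  congr 1
  · apply Finset.prod_nbij' (fun j => j - m) (fun j => j + m)
    · intro a ha; simp at ha ⊢; omega
    · intro a ha; simp at ha ⊢; omega
    · intro a ha; simp at ha; omega
    · intro a ha; simp
    · intro a ha
      simp at ha
      have : ¬ (a ≤ m) := by omega
      rw [if_neg this]
      congr 1
      omega
  · apply Finset.prod_congr rfl
    intro j hj
    simp at hj
    rw [if_pos hj.2]
    congr 1
    omega
end
end

section
/- Let n ≥ 1 and let λ⁰, λ¹, λ² be partitions with λ⁰_j ≤ n−j, λ¹_j ≤ n−j, λ²_j ≤ n−j for all j, such that for some s ≥ 1: λ⁰ = λ¹ + ε_s and λ² = λ¹ − ε_s (adding, respectively removing, one box in row s of λ¹). Then the modular law holds: (1+q) · ∏_{j=1}^{n} [n − λ¹_j − j + 1]_q = q · ∏_{j=1}^{n} [n − λ⁰_j − j + 1]_q + ∏_{j=1}^{n} [n − λ²_j − j + 1]_q. -/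
open Finset Polynomial
open scoped Classical

noncomputable section

lemma qInt_succ (k : ℕ) : qInt (k + 1) = Polynomial.X * qInt k + 1 := by
  unfold qInt
  rw [Finset.sum_range_succ']
  simp [Finset.mul_sum, pow_succ, mul_comm]

lemma qInt_key (a : ℕ) :
    (1 + Polynomial.X) * qInt (a + 1) =
      Polynomial.X * qInt a + qInt (a + 2) := by
  have h1 : qInt (a + 1) = Polynomial.X * qInt a + 1 := qInt_succ a
  have h2 : qInt (a + 2) = Polynomial.X * qInt (a + 1) + 1 := qInt_succ (a + 1)
  rw [h2, h1]; ring

/-- Lemma (modular law, case 1): if `λ⁰ = λ¹ + ε_s` and `λ² = λ¹ − ε_s` (all three fitting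
above the staircase in the `n × n` square), then
`(1+q)·∏_j [n−λ¹_j−j+1]_q = q·∏_j [n−λ⁰_j−j+1]_q + ∏_j [n−λ²_j−j+1]_q`. -/
theorem modular_law_case1 (n s : ℕ) (hn : 1 ≤ n) (hs : 1 ≤ s)
    (lam0 lam1 lam2 : ℕ → ℕ)
    (hA0 : ∀ i j, 1 ≤ i → i ≤ j → lam0 j ≤ lam0 i)
    (hA1 : ∀ i j, 1 ≤ i → i ≤ j → lam1 j ≤ lam1 i)
    (hA2 : ∀ i j, 1 ≤ i → i ≤ j → lam2 j ≤ lam2 i)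
    (hS0 : ∀ j, 1 ≤ j → j ≤ n → lam0 j + j ≤ n)
    (hS1 : ∀ j, 1 ≤ j → j ≤ n → lam1 j + j ≤ n)
    (hS2 : ∀ j, 1 ≤ j → j ≤ n → lam2 j + j ≤ n)
    (h0s : lam0 s = lam1 s + 1) (h0 : ∀ j, j ≠ s → lam0 j = lam1 j)
    (h2s : lam2 s + 1 = lam1 s) (h2 : ∀ j, j ≠ s → lam2 j = lam1 j) :
    (1 + Polynomial.X) * ∏ j ∈ Finset.Icc 1 n, qInt (n + 1 - (lam1 j + j)) =
      Polynomial.X * (∏ j ∈ Finset.Icc 1 n, qInt (n + 1 - (lam0 j + j))) +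
        ∏ j ∈ Finset.Icc 1 n, qInt (n + 1 - (lam2 j + j)) := by
  by_cases hsn : s ≤ n
  · have hm : lam1 s + s ≤ n := hS1 s hs hsn
    have h1s : 1 ≤ lam1 s := by omega
    have hmem : s ∈ Finset.Icc 1 n := Finset.mem_Icc.mpr ⟨hs, hsn⟩
    set a := n - (lam1 s + s) with ha
    rw [← Finset.mul_prod_erase _ _ hmem, ← Finset.mul_prod_erase _ _ hmem,
        ← Finset.mul_prod_erase _ _ hmem]
    have e0 : ∀ j ∈ (Finset.Icc 1 n).erase s,
        qInt (n + 1 - (lam0 j + j)) = qInt (n + 1 - (lam1 j + j)) := by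
      intro j hj; rw [h0 j (Finset.ne_of_mem_erase hj)]
    have e2 : ∀ j ∈ (Finset.Icc 1 n).erase s,
        qInt (n + 1 - (lam2 j + j)) = qInt (n + 1 - (lam1 j + j)) := by
      intro j hj; rw [h2 j (Finset.ne_of_mem_erase hj)]
    rw [Finset.prod_congr rfl e0, Finset.prod_congr rfl e2]
    have i1 : n + 1 - (lam1 s + s) = a + 1 := by omega
    have i0 : n + 1 - (lam0 s + s) = a := by omega
    have i2 : n + 1 - (lam2 s + s) = a + 2 := by omega
    rw [i1, i0, i2]
    have := qInt_key a
    set P := ∏ x ∈ (Finset.Icc 1 n).erase s, qInt (n + 1 - (lam1 x + x))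
    calc (1 + Polynomial.X) * (qInt (a + 1) * P)
        = ((1 + Polynomial.X) * qInt (a + 1)) * P := by ring
      _ = (Polynomial.X * qInt a + qInt (a + 2)) * P := by rw [this]
      _ = Polynomial.X * (qInt a * P) + qInt (a + 2) * P := by ring
  · have e0 : ∀ j ∈ Finset.Icc 1 n,
        qInt (n + 1 - (lam0 j + j)) = qInt (n + 1 - (lam1 j + j)) := by
      intro j hj
      have := Finset.mem_Icc.mp hj
      rw [h0 j (by omega)]
    have e2 : ∀ j ∈ Finset.Icc 1 n,
        qInt (n + 1 - (lam2 j + j)) = qInt (n + 1 - (lam1 j + j)) := by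
      intro j hj
      have := Finset.mem_Icc.mp hj
      rw [h2 j (by omega)]
    rw [Finset.prod_congr rfl e0, Finset.prod_congr rfl e2]
    ring
end
end

section
/- Let n ≥ 1 and let λ⁰, λ¹, λ² be partitions with λ⁰_j ≤ n−j, λ¹_j ≤ n−j, λ²_j ≤ n−j for all j, such that for some r ≥ 1: λ¹_r − λ¹_{r+1} = 1, λ² = λ¹ − ε_r (one box removed from row r), and λ⁰ = λ¹ + ε_{r+1} (one box added to row r+1). Then the modular law holds: (1+q) · ∏_{j=1}^{n} [n − λ¹_j − j + 1]_q = q · ∏_{j=1}^{n} [n − λ⁰_j − j + 1]_q + ∏_{j=1}^{n} [n − λ²_j − j + 1]_q. -/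
open Finset Polynomial
open scoped Classical

noncomputable section

lemma X_mul_qInt (k : ℕ) : Polynomial.X * qInt k + 1 = qInt (k + 1) := by
  rw [qInt, qInt, Finset.sum_range_succ', Finset.mul_sum]
  simp [pow_succ, mul_comm]

/-- Lemma (modular law, case 2): if `λ¹_r − λ¹_{r+1} = 1`, `λ² = λ¹ − ε_r` and
`λ⁰ = λ¹ + ε_{r+1}` (all three fitting above the staircase in the `n × n` square), then
`(1+q)·∏_j [n−λ¹_j−j+1]_q = q·∏_j [n−λ⁰_j−j+1]_q + ∏_j [n−λ²_j−j+1]_q`. -/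
theorem modular_law_case2 (n r : ℕ) (hn : 1 ≤ n) (hr : 1 ≤ r)
    (lam0 lam1 lam2 : ℕ → ℕ)
    (hA0 : ∀ i j, 1 ≤ i → i ≤ j → lam0 j ≤ lam0 i)
    (hA1 : ∀ i j, 1 ≤ i → i ≤ j → lam1 j ≤ lam1 i)
    (hA2 : ∀ i j, 1 ≤ i → i ≤ j → lam2 j ≤ lam2 i)
    (hS0 : ∀ j, 1 ≤ j → j ≤ n → lam0 j + j ≤ n)
    (hS1 : ∀ j, 1 ≤ j → j ≤ n → lam1 j + j ≤ n)
    (hS2 : ∀ j, 1 ≤ j → j ≤ n → lam2 j + j ≤ n)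
    (hgap : lam1 r = lam1 (r + 1) + 1)
    (h2r : lam2 r + 1 = lam1 r) (h2 : ∀ j, j ≠ r → lam2 j = lam1 j)
    (h0r : lam0 (r + 1) = lam1 (r + 1) + 1) (h0 : ∀ j, j ≠ r + 1 → lam0 j = lam1 j) :
    (1 + Polynomial.X) * ∏ j ∈ Finset.Icc 1 n, qInt (n + 1 - (lam1 j + j)) =
      Polynomial.X * (∏ j ∈ Finset.Icc 1 n, qInt (n + 1 - (lam0 j + j))) +
        ∏ j ∈ Finset.Icc 1 n, qInt (n + 1 - (lam2 j + j)) := by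
  by_cases hrn : r + 1 ≤ n
  · -- main case: both rows r and r+1 appear in the products
    have hr1 : r ∈ Finset.Icc 1 n := by simp; omega
    have hr2 : r + 1 ∈ (Finset.Icc 1 n).erase r := by simp; omega
    have hmn : lam1 r + r ≤ n := hS1 r hr (by omega)
    set a := n - (lam1 r + r) with ha
    have e0rr : lam0 r = lam1 r := h0 r (by omega)
    have e2rr : lam2 (r + 1) = lam1 (r + 1) := h2 (r + 1) (by omega)
    have e1r : n + 1 - (lam1 r + r) = a + 1 := by omega
    have e1r1 : n + 1 - (lam1 (r + 1) + (r + 1)) = a + 1 := by omega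
    have e0r : n + 1 - (lam0 r + r) = a + 1 := by omega
    have e0r1 : n + 1 - (lam0 (r + 1) + (r + 1)) = a := by omega
    have e2r : n + 1 - (lam2 r + r) = a + 2 := by omega
    have e2r1 : n + 1 - (lam2 (r + 1) + (r + 1)) = a + 1 := by omega
    have hcong0 : ∀ j ∈ ((Finset.Icc 1 n).erase r).erase (r + 1),
        qInt (n + 1 - (lam0 j + j)) = qInt (n + 1 - (lam1 j + j)) := by
      intro j hj
      simp only [Finset.mem_erase] at hj
      rw [h0 j hj.1]
    have hcong2 : ∀ j ∈ ((Finset.Icc 1 n).erase r).erase (r + 1),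
        qInt (n + 1 - (lam2 j + j)) = qInt (n + 1 - (lam1 j + j)) := by
      intro j hj
      simp only [Finset.mem_erase] at hj
      rw [h2 j hj.2.1]
    set R := ∏ j ∈ ((Finset.Icc 1 n).erase r).erase (r + 1),
        qInt (n + 1 - (lam1 j + j)) with hR
    have P1 : ∏ j ∈ Finset.Icc 1 n, qInt (n + 1 - (lam1 j + j))
        = qInt (a + 1) * (qInt (a + 1) * R) := by
      rw [← Finset.mul_prod_erase _ _ hr1, ← Finset.mul_prod_erase _ _ hr2, e1r, e1r1]
    have P0 : ∏ j ∈ Finset.Icc 1 n, qInt (n + 1 - (lam0 j + j))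
        = qInt (a + 1) * (qInt a * R) := by
      rw [← Finset.mul_prod_erase _ _ hr1, ← Finset.mul_prod_erase _ _ hr2, e0r, e0r1,
        Finset.prod_congr rfl hcong0]
    have P2 : ∏ j ∈ Finset.Icc 1 n, qInt (n + 1 - (lam2 j + j))
        = qInt (a + 2) * (qInt (a + 1) * R) := by
      rw [← Finset.mul_prod_erase _ _ hr1, ← Finset.mul_prod_erase _ _ hr2, e2r, e2r1,
        Finset.prod_congr rfl hcong2]
    rw [P0, P1, P2]
    linear_combination (qInt (a + 1) * R) * qInt_key a
  · -- trivial case: r > n, all three products are equal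
    have hrn' : n < r := by
      rcases Nat.lt_or_ge n r with h | h
      · exact h
      · -- r ≤ n, so r = n (since ¬ r + 1 ≤ n); derive a contradiction
        exfalso
        have hre : r = n := by omega
        have := hS1 r hr (by omega)
        omega
    have P0 : ∏ j ∈ Finset.Icc 1 n, qInt (n + 1 - (lam0 j + j))
        = ∏ j ∈ Finset.Icc 1 n, qInt (n + 1 - (lam1 j + j)) := by
      refine Finset.prod_congr rfl fun j hj => ?_
      simp only [Finset.mem_Icc] at hj
      rw [h0 j (by omega)]
    have P2 : ∏ j ∈ Finset.Icc 1 n, qInt (n + 1 - (lam2 j + j))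
        = ∏ j ∈ Finset.Icc 1 n, qInt (n + 1 - (lam1 j + j)) := by
      refine Finset.prod_congr rfl fun j hj => ?_
      simp only [Finset.mem_Icc] at hj
      rw [h2 j (by omega)]
    rw [P0, P2]
    ring
end
end

section
/- For every partition λ and every k ≥ 0, the Garsia–Remmel q-rook number is invariant under conjugation: R_k(λ;q) = R_k(λ';q), where λ' is the conjugate (transpose) partition of λ. -/
open Finset Polynomial
open scoped Classical

noncomputable section

lemma mem_image_swap (C : Finset (ℕ × ℕ)) (c : ℕ × ℕ) :
    c ∈ C.image Prod.swap ↔ c.swap ∈ C := by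
  constructor
  · intro h
    obtain ⟨a, ha, rfl⟩ := Finset.mem_image.1 h
    simpa using ha
  · intro h
    have := Finset.mem_image_of_mem Prod.swap h
    simpa using this

lemma key_le (L : ℕ) (lam : ℕ → ℕ)
    (hAnti : ∀ i j, 1 ≤ i → i ≤ j → lam j ≤ lam i)
    {i j : ℕ} (hi : 1 ≤ i) (hj : 1 ≤ j) :
    i ≤ conjPart lam L j ↔ i ≤ L ∧ j ≤ lam i := by
  unfold conjPart
  constructor
  · intro h
    have hL : i ≤ L := by
      calc i ≤ _ := h
        _ ≤ (Finset.Icc 1 L).card := Finset.card_filter_le _ _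
        _ = L := by simp
    refine ⟨hL, ?_⟩
    by_contra hc
    push_neg at hc
    have hsub : ((Finset.Icc 1 L).filter fun i' => j ≤ lam i') ⊆ Finset.Icc 1 (i - 1) := by
      intro i' hi'
      obtain ⟨hmem, hle⟩ := Finset.mem_filter.1 hi'
      rw [Finset.mem_Icc] at hmem ⊢
      refine ⟨hmem.1, ?_⟩
      by_contra hgt
      push_neg at hgt
      have : i ≤ i' := by omega
      have := hAnti i i' hi this
      omega
    have := Finset.card_le_card hsub
    simp only [Nat.card_Icc] at this
    omega
  · rintro ⟨hL, hji⟩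
    have hsub : Finset.Icc 1 i ⊆ (Finset.Icc 1 L).filter fun i' => j ≤ lam i' := by
      intro i' hi'
      rw [Finset.mem_Icc] at hi'
      refine Finset.mem_filter.2 ⟨Finset.mem_Icc.2 ⟨hi'.1, le_trans hi'.2 hL⟩, ?_⟩
      exact le_trans hji (hAnti i' i hi'.1 hi'.2)
    have := Finset.card_le_card hsub
    simpa using this

lemma cells_conj (L : ℕ) (lam : ℕ → ℕ)
    (hAnti : ∀ i j, 1 ≤ i → i ≤ j → lam j ≤ lam i) :
    cells (fun j => conjPart lam L j) (lam 1) = (cells lam L).image Prod.swap := by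
  ext c
  rw [mem_image_swap]
  simp only [cells, Finset.mem_filter, Finset.mem_product, Finset.mem_Icc, Prod.fst_swap,
    Prod.snd_swap]
  constructor
  · rintro ⟨⟨⟨h1, h2⟩, h3, h4⟩, h5⟩
    have := (key_le L lam hAnti h3 h1).1 h5
    exact ⟨⟨⟨h3, this.1⟩, h1, h2⟩, this.2⟩
  · rintro ⟨⟨⟨h1, h2⟩, h3, h4⟩, h5⟩
    have hkey := (key_le L lam hAnti h1 h3).2 ⟨h2, h5⟩
    have hmu1 : c.2 ≤ conjPart lam L 1 :=
      (key_le L lam hAnti h1 le_rfl).2 ⟨h2, le_trans h3 h5⟩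
    exact ⟨⟨⟨h3, h4⟩, h1, hmu1⟩, hkey⟩

lemma na_image_of (C : Finset (ℕ × ℕ)) (h : NonAttacking C) :
    NonAttacking (C.image Prod.swap) := by
  intro a ha b hb hab
  rw [mem_image_swap] at ha hb
  have hne : a.swap ≠ b.swap := fun h' => hab (Prod.swap_injective h')
  obtain ⟨h1, h2⟩ := h _ ha _ hb hne
  simp only [Prod.fst_swap, Prod.snd_swap] at h1 h2
  exact ⟨h2, h1⟩

lemma image_swap_swap (C : Finset (ℕ × ℕ)) : (C.image Prod.swap).image Prod.swap = C := by
  rw [Finset.image_image]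
  simp [Function.comp_def]

lemma inv_image (L : ℕ) (lam : ℕ → ℕ)
    (hAnti : ∀ i j, 1 ≤ i → i ≤ j → lam j ≤ lam i) (C : Finset (ℕ × ℕ)) :
    rookInv (fun j => conjPart lam L j) (lam 1) (C.image Prod.swap) = rookInv lam L C := by
  unfold rookInv
  rw [cells_conj L lam hAnti, Finset.filter_image]
  rw [Finset.card_image_of_injective _ Prod.swap_injective]
  congr 1
  apply Finset.filter_congr
  intro c _
  simp only [mem_image_swap, Prod.swap_swap, Prod.fst_swap, Prod.snd_swap]
  constructor
  · rintro ⟨h1, h2, h3⟩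
    refine ⟨h1, fun r hr hr2 => ?_, fun r hr hr1 => ?_⟩
    · have := h3 r.swap (by simpa using hr) (by simpa using hr2)
      simpa using this
    · have := h2 r.swap (by simpa using hr) (by simpa using hr1)
      simpa using this
  · rintro ⟨h1, h2, h3⟩
    refine ⟨h1, fun r hr hr2 => ?_, fun r hr hr1 => ?_⟩
    · have := h3 r.swap hr (by simpa using hr2)
      simpa using this
    · have := h2 r.swap hr (by simpa using hr1)
      simpa using this

/-- Proposition: the Garsia–Remmel q-rook numbers are invariant under conjugation:
`R_k(λ; q) = R_k(λ'; q)` (here `lam` is supported on `[1..L]`, and the conjugate has at most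
`lam 1` parts). -/
theorem rook_conjugate (L : ℕ) (lam : ℕ → ℕ)
    (hAnti : ∀ i j, 1 ≤ i → i ≤ j → lam j ≤ lam i)
    (hsupp : ∀ i, L < i → lam i = 0) (k : ℕ) :
    qRook lam L k = qRook (fun j => conjPart lam L j) (lam 1) k := by
  unfold qRook
  rw [cells_conj L lam hAnti]
  have hset : (Finset.powersetCard k ((cells lam L).image Prod.swap)).filter NonAttacking =
      ((Finset.powersetCard k (cells lam L)).filter NonAttacking).image
        (fun C => C.image Prod.swap) := by
    ext C'
    simp only [Finset.mem_filter, Finset.mem_powersetCard, Finset.mem_image]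
    constructor
    · rintro ⟨⟨hsub, hcard⟩, hna⟩
      refine ⟨C'.image Prod.swap, ⟨⟨?_, ?_⟩, na_image_of _ hna⟩, image_swap_swap _⟩
      · intro c hc
        rw [mem_image_swap] at hc
        have := hsub hc
        rw [mem_image_swap, Prod.swap_swap] at this
        exact this
      · rw [Finset.card_image_of_injective _ Prod.swap_injective, hcard]
    · rintro ⟨C, ⟨⟨hsub, hcard⟩, hna⟩, rfl⟩
      refine ⟨⟨Finset.image_subset_image hsub, ?_⟩, na_image_of _ hna⟩
      rw [Finset.card_image_of_injective _ Prod.swap_injective, hcard]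
  rw [hset]
  rw [Finset.sum_image (fun x _ y _ h => Finset.image_injective Prod.swap_injective h)]
  refine Finset.sum_congr rfl fun C _ => ?_
  rw [inv_image L lam hAnti]
end
end

section
/- Let π be a Dyck path of semilength n with λ = λ(π), let π' be the Dyck path of semilength n−1 obtained by deleting the last NE corner of π, let ν ⊢ n−1 and T ∈ SYT^{π'}_ν. Then #{boxes b of ν : (T(b), n) ∈ Area(π)} = (n−1) − λ₁, and consequently Σ_{j ≥ 1} N(j) = ν₁ − (n−1) + λ₁, where N(j) = #{boxes b in row j of ν with no box of ν directly below them and T(b) <_π n}. In particular, ν₁ ≥ (n−1) − λ₁. -/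
open Finset Polynomial
open scoped Classical

noncomputable section

/-- Lemma: for `T ∈ SYT^{π'}_ν`, the number of cells `b` of `ν` with `(T b, n) ∈ Area(π)`
is `(n−1) − λ₁`; consequently `Σ_{j≥1} N(j) = ν₁ − (n−1) + λ₁` (stated additively), and in
particular `ν₁ ≥ (n−1) − λ₁`. -/
theorem area_entry_count (n : ℕ) (hn : 1 ≤ n) (lam : ℕ → ℕ)
    (hAnti : ∀ i j, 1 ≤ i → i ≤ j → lam j ≤ lam i)
    (hStair : ∀ i, 1 ≤ i → i ≤ n → lam i + i ≤ n)
    (nu : ℕ → ℕ) (hnu : IsPartitionOf (n - 1) nu) (T : ℕ × ℕ → ℕ)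
    (hT : IsSYTpi (shiftPart lam) (n - 1) nu (n - 1) T) :
    ((cells nu (n - 1)).filter fun b => InArea lam n (T b) n).card = n - 1 - lam 1 ∧
    (∑ j ∈ Finset.Icc 1 (n - 1), Nstat lam n nu T j) + (n - 1) = nu 1 + lam 1 ∧
    n - 1 - lam 1 ≤ nu 1 := by
  classical
  set m := n - 1 with hm
  have hlam1 : lam 1 ≤ m := by have := hStair 1 le_rfl hn; omega
  have hcell : ∀ p : ℕ × ℕ, p ∈ cells nu m ↔
      (1 ≤ p.1 ∧ p.1 ≤ m) ∧ (1 ≤ p.2 ∧ p.2 ≤ nu 1) ∧ p.2 ≤ nu p.1 := by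
    intro p
    simp [cells, Finset.mem_filter, Finset.mem_product, Finset.mem_Icc, and_assoc]
  have hmem : ∀ b ∈ cells nu m, 1 ≤ T b ∧ T b ≤ m := by
    intro b hb
    have := hT.1.2.1.1 hb
    simpa [Set.mem_Icc] using this
  -- conjPart of lam at i is 0 iff lam 1 < i
  have hconj0 : ∀ i : ℕ, (conjPart lam n i = 0 ↔ lam 1 < i) := by
    intro i
    rw [conjPart, Finset.card_eq_zero, Finset.filter_eq_empty_iff]
    constructor
    · intro h
      have h1 : (1:ℕ) ∈ Finset.Icc 1 n := by simp [hn]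
      have := h h1
      omega
    · intro h k hk
      rw [Finset.mem_Icc] at hk
      have := hAnti 1 k le_rfl hk.1
      omega
  -- InArea lam n i n iff lam 1 < i, for i ≤ m
  have hArea : ∀ i : ℕ, 1 ≤ i → i ≤ m → (InArea lam n i n ↔ lam 1 < i) := by
    intro i h1 h2
    unfold InArea
    constructor
    · rintro ⟨-, h⟩
      exact (hconj0 i).1 (by omega)
    · intro h
      have := (hconj0 i).2 h
      constructor
      · omega
      · omega
  -- cells with big entry have no cell below them
  have hBottom : ∀ b ∈ cells nu m, lam 1 < T b → (b.1 + 1, b.2) ∉ cells nu m := by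
    intro b hb hlt hc
    have h2 : 2 ≤ (b.1 + 1, b.2).1 := by
      have := (hcell b).1 hb
      simp only []
      omega
    have hpi := hT.2 (b.1 + 1, b.2) hc h2
    simp only [Nat.add_sub_cancel] at hpi
    have hb' : (b.1, b.2) = b := rfl
    rw [hb'] at hpi
    obtain ⟨hlt2, hnotarea⟩ := hpi
    apply hnotarea
    constructor
    · exact hlt2
    · have hconj' : conjPart (shiftPart lam) m (T b) = 0 := by
        rw [conjPart, Finset.card_eq_zero, Finset.filter_eq_empty_iff]
        intro k hk
        rw [Finset.mem_Icc] at hk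
        have := hAnti 1 (k + 1) le_rfl (by omega)
        simp only [shiftPart]
        omega
      have := (hmem _ hc).2
      omega
  -- Part 1: count of area cells
  have h1 : ((cells nu m).filter fun b => InArea lam n (T b) n).card = m - lam 1 := by
    rw [show m - lam 1 = (Finset.Ioc (lam 1) m).card by simp]
    apply Finset.card_bij (fun b _ => T b)
    · intro b hb
      rw [Finset.mem_filter] at hb
      have hmm := hmem b hb.1
      have := (hArea (T b) hmm.1 hmm.2).1 hb.2
      rw [Finset.mem_Ioc]
      omega
    · intro a ha b hb hab
      rw [Finset.mem_filter] at ha hb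
      exact hT.1.2.1.2.1 ha.1 hb.1 hab
    · intro t ht
      rw [Finset.mem_Ioc] at ht
      have ht' : t ∈ Set.Icc 1 m := ⟨by omega, ht.2⟩
      obtain ⟨b, hb, hbt⟩ := hT.1.2.1.2.2 ht'
      refine ⟨b, ?_, hbt⟩
      rw [Finset.mem_filter]
      refine ⟨hb, ?_⟩
      rw [hbt]
      have hmm := hmem b hb
      exact (hArea t (by omega) ht.2).2 (by omega)
  have hm1 : 1 ≤ nu 1 → 1 ≤ m := by
    intro h
    by_contra hc
    have := hnu.2.1 1 (by omega)
    omega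
  -- bottom cells
  set Bot := (cells nu m).filter (fun b => (b.1 + 1, b.2) ∉ cells nu m) with hBotdef
  have hBotcard : Bot.card = nu 1 := by
    rw [show nu 1 = (Finset.Icc 1 (nu 1)).card by simp]
    apply Finset.card_bij (fun b _ => b.2)
    · intro b hb
      rw [hBotdef, Finset.mem_filter] at hb
      have := (hcell b).1 hb.1
      rw [Finset.mem_Icc]
      omega
    · intro a ha b hb hab
      rw [hBotdef, Finset.mem_filter] at ha hb
      have ha1 := (hcell a).1 ha.1
      have hb1 := (hcell b).1 hb.1
      have key : ∀ x y : ℕ × ℕ, x ∈ cells nu m → y ∈ cells nu m →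
          ((y.1 + 1, y.2) ∉ cells nu m) → x.2 = y.2 → ¬ (y.1 < x.1) := by
        intro x y hx hy hyb hxy hlt
        apply hyb
        rw [hcell]
        have hx1 := (hcell x).1 hx
        have hy1 := (hcell y).1 hy
        have hmono : nu x.1 ≤ nu (y.1 + 1) := hnu.1 (y.1 + 1) x.1 (by omega) (by omega)
        simp only []
        omega
      have h1 := key a b ha.1 hb.1 hb.2 hab
      have h2 := key b a hb.1 ha.1 ha.2 hab.symm
      have : a.1 = b.1 := by omega
      exact Prod.ext this hab
    · intro j hj
      rw [Finset.mem_Icc] at hj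
      have hm' : 1 ≤ m := hm1 (by omega)
      set F := (Finset.Icc 1 m).filter (fun i => j ≤ nu i) with hF
      have hne : F.Nonempty := ⟨1, by rw [hF, Finset.mem_filter, Finset.mem_Icc]; omega⟩
      set i0 := F.max' hne with hi0
      have hi0F : i0 ∈ F := F.max'_mem hne
      rw [hF, Finset.mem_filter, Finset.mem_Icc] at hi0F
      refine ⟨(i0, j), ?_, rfl⟩
      rw [hBotdef, Finset.mem_filter]
      constructor
      · rw [hcell]
        simp only []
        omega
      · intro hc
        rw [hcell] at hc
        simp only [] at hc
        have : i0 + 1 ∈ F := by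
          rw [hF, Finset.mem_filter, Finset.mem_Icc]
          omega
        have := F.le_max' _ this
        omega
  -- PiLt at a cell is equivalent to T b ≤ lam 1
  have hPiLt : ∀ b ∈ cells nu m, (PiLt lam n (T b) n ↔ T b ≤ lam 1) := by
    intro b hb
    have hmm := hmem b hb
    unfold PiLt
    rw [hArea (T b) hmm.1 hmm.2]
    omega
  -- the non-PiLt bottom cells are exactly the area cells
  have hBotArea : Bot.filter (fun b => ¬ PiLt lam n (T b) n)
      = (cells nu m).filter (fun b => InArea lam n (T b) n) := by
    ext b
    rw [hBotdef, Finset.filter_filter, Finset.mem_filter, Finset.mem_filter]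
    constructor
    · rintro ⟨hb, -, hnp⟩
      have hmm := hmem b hb
      rw [hPiLt b hb] at hnp
      exact ⟨hb, (hArea (T b) hmm.1 hmm.2).2 (by omega)⟩
    · rintro ⟨hb, hia⟩
      have hmm := hmem b hb
      have hlt : lam 1 < T b := (hArea (T b) hmm.1 hmm.2).1 hia
      refine ⟨hb, hBottom b hb hlt, ?_⟩
      rw [hPiLt b hb]
      omega
  have hsplit : (Bot.filter (fun b => PiLt lam n (T b) n)).card + (m - lam 1) = nu 1 := by
    rw [← h1, ← hBotArea, ← hBotcard]
    exact Finset.card_filter_add_card_filter_not _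
  -- sum of Nstat
  have hsum : ∑ j ∈ Finset.Icc 1 m, Nstat lam n nu T j
      = (Bot.filter (fun b => PiLt lam n (T b) n)).card := by
    rw [Finset.card_eq_sum_card_fiberwise (f := Prod.fst) (t := Finset.Icc 1 m)
      (fun b hb => by
        simp only [Finset.mem_coe, hBotdef, Finset.filter_filter, Finset.mem_filter] at hb
        have := (hcell b).1 hb.1
        rw [Finset.mem_coe, Finset.mem_Icc]
        omega)]
    apply Finset.sum_congr rfl
    intro j _
    unfold Nstat
    congr 1
    rw [hBotdef, Finset.filter_filter, Finset.filter_filter]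
    apply Finset.filter_congr
    intro b _
    tauto
  rw [← hm] at *
  refine ⟨h1, ?_, ?_⟩
  · rw [hsum]
    omega
  · omega
end
end
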